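/- arXiv:math/0311310 — 10 statements merged into one kernel-verified Lean document; each statement's English description precedes it below -/
import Mathlib

section
/- Let Δ be a nonsquare integer with Δ ≡ 0 or 1 (mod 4). If (r,s) and (t,u) are integer points on the Pell conic X² − ΔY² = 4, then (rt + Δsu)/2 and (ru + st)/2 are integers, and the pair ((rt + Δsu)/2, (ru + st)/2) again satisfies X² − ΔY² = 4. Moreover, if (r,s) ≠ (t,u) and r ≠ t, then 2·(Δ(s−u)² + (r−t)²)/(Δ(s−u)² − (r−t)²) = (rt + Δsu)/2 and 4·(r−t)(s−u)/(Δ(s−u)² − (r−t)²) = (ru + st)/2. -/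
/-!
Both coordinates of the product point are even: modulo 2 the conic says `r ≡ Δ s` and `t ≡ Δ u`
(as `x² ≡ x`), so `rt + Δsu ≡ 2Δsu` and `ru + st ≡ 2Δsu`. The norm of the product point is the
product of the norms (Brahmagupta's identity). The chord formulas are polynomial identities modulo
the two conic equations, and their common denominator `Δ(s-u)² - (r-t)²` is nonzero because `Δ`
is not a rational square.
-/

theorem Int.two_dvd_pell_mul {Δ r s t u : ℤ} (hP : 2 ∣ r ^ 2 - Δ * s ^ 2)
    (hQ : 2 ∣ t ^ 2 - Δ * u ^ 2) : 2 ∣ r * t + Δ * s * u ∧ 2 ∣ r * u + s * t := by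
  simp only [← even_iff_two_dvd, Int.even_sub, Int.even_add, Int.even_mul, Int.even_pow] at *
  tauto

section CommRing

variable {R : Type*} [CommRing R] {Δ r s t u : R}

theorem pell_norm_mul (Δ r s t u : R) :
    (r * t + Δ * s * u) ^ 2 - Δ * (r * u + s * t) ^ 2 =
      (r ^ 2 - Δ * s ^ 2) * (t ^ 2 - Δ * u ^ 2) := by
  ring

theorem pell_chord_fst (hP : r ^ 2 - Δ * s ^ 2 = 4) (hQ : t ^ 2 - Δ * u ^ 2 = 4) :
    2 * (Δ * (s - u) ^ 2 + (r - t) ^ 2) * 2 =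
      (r * t + Δ * s * u) * (Δ * (s - u) ^ 2 - (r - t) ^ 2) := by
  linear_combination (r * t + Δ * s * u - 4 - 2 * Δ * u ^ 2) * hP +
    (r * t + Δ * s * u + 4 - 2 * r ^ 2) * hQ

theorem pell_chord_snd (hP : r ^ 2 - Δ * s ^ 2 = 4) (hQ : t ^ 2 - Δ * u ^ 2 = 4) :
    4 * ((r - t) * (s - u)) * 2 =
      (r * u + s * t) * (Δ * (s - u) ^ 2 - (r - t) ^ 2) := by
  linear_combination (r * u + s * t - 2 * t * u) * hP + (r * u + s * t - 2 * r * s) * hQ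

end CommRing

theorem mul_sq_sub_sq_ne_zero_of_not_isSquare {K : Type*} [Field K] {Δ a b : K}
    (hΔ : ¬IsSquare Δ) (ha : a ≠ 0) : Δ * b ^ 2 - a ^ 2 ≠ 0 := by
  intro h
  by_cases hb : b = 0
  · simp_all
  · exact hΔ ⟨a / b, by field_simp; linear_combination h⟩

theorem pell_addition_integral_general (Δ : ℤ) (hΔns : ¬ IsSquare Δ)
    (r s t u : ℤ) (hP : r ^ 2 - Δ * s ^ 2 = 4) (hQ : t ^ 2 - Δ * u ^ 2 = 4) :
    (∃ X Y : ℤ,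
      (X : ℚ) = ((r : ℚ) * t + (Δ : ℚ) * s * u) / 2 ∧
      (Y : ℚ) = ((r : ℚ) * u + (s : ℚ) * t) / 2 ∧
      X ^ 2 - Δ * Y ^ 2 = 4) ∧
    ((r, s) ≠ (t, u) → r ≠ t →
      2 * ((Δ : ℚ) * ((s : ℚ) - u) ^ 2 + ((r : ℚ) - t) ^ 2) /
          ((Δ : ℚ) * ((s : ℚ) - u) ^ 2 - ((r : ℚ) - t) ^ 2) =
        ((r : ℚ) * t + (Δ : ℚ) * s * u) / 2 ∧
      4 * (((r : ℚ) - t) * ((s : ℚ) - u)) /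
          ((Δ : ℚ) * ((s : ℚ) - u) ^ 2 - ((r : ℚ) - t) ^ 2) =
        ((r : ℚ) * u + (s : ℚ) * t) / 2) := by
  have h4 : (2 : ℤ) ∣ 4 := by norm_num
  obtain ⟨⟨X, hX⟩, ⟨Y, hY⟩⟩ := Int.two_dvd_pell_mul (hP ▸ h4) (hQ ▸ h4)
  refine ⟨⟨X, Y, ?_, ?_, ?_⟩, fun _ hrt => ?_⟩
  · rw [eq_div_iff two_ne_zero]; exact_mod_cast (by linarith : X * 2 = r * t + Δ * s * u)
  · rw [eq_div_iff two_ne_zero]; exact_mod_cast (by linarith : Y * 2 = r * u + s * t)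
  · have h := pell_norm_mul Δ r s t u
    rw [hX, hY, hP, hQ] at h
    linarith
  have hPq : (r : ℚ) ^ 2 - Δ * s ^ 2 = 4 := by exact_mod_cast hP
  have hQq : (t : ℚ) ^ 2 - Δ * u ^ 2 = 4 := by exact_mod_cast hQ
  have hD : (Δ : ℚ) * ((s : ℚ) - u) ^ 2 - ((r : ℚ) - t) ^ 2 ≠ 0 :=
    mul_sq_sub_sq_ne_zero_of_not_isSquare (Rat.isSquare_intCast_iff.not.mpr hΔns)
      (sub_ne_zero.mpr (Int.cast_injective.ne hrt))
  rw [div_eq_div_iff hD two_ne_zero, div_eq_div_iff hD two_ne_zero]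
  exact ⟨pell_chord_fst hPq hQq, pell_chord_snd hPq hQq⟩

/-- For a nonsquare integer `Δ ≡ 0, 1 (mod 4)` and integral points
`(r,s)`, `(t,u)` on the Pell conic `X² - ΔY² = 4`, the quantities `(rt + Δsu)/2`
and `(ru + st)/2` are integers and form again an integral point on the conic;
moreover if `(r,s) ≠ (t,u)` and `r ≠ t`, the chord-addition formulas agree with
these quantities. -/
theorem pell_addition_integral (Δ : ℤ) (hΔns : ¬ IsSquare Δ)
    (hΔ4 : Δ % 4 = 0 ∨ Δ % 4 = 1)
    (r s t u : ℤ) (hP : r ^ 2 - Δ * s ^ 2 = 4) (hQ : t ^ 2 - Δ * u ^ 2 = 4) :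
    (∃ X Y : ℤ,
      (X : ℚ) = ((r : ℚ) * t + (Δ : ℚ) * s * u) / 2 ∧
      (Y : ℚ) = ((r : ℚ) * u + (s : ℚ) * t) / 2 ∧
      X ^ 2 - Δ * Y ^ 2 = 4) ∧
    ((r, s) ≠ (t, u) → r ≠ t →
      2 * ((Δ : ℚ) * ((s : ℚ) - u) ^ 2 + ((r : ℚ) - t) ^ 2) /
          ((Δ : ℚ) * ((s : ℚ) - u) ^ 2 - ((r : ℚ) - t) ^ 2) =
        ((r : ℚ) * t + (Δ : ℚ) * s * u) / 2 ∧
      4 * (((r : ℚ) - t) * ((s : ℚ) - u)) /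
          ((Δ : ℚ) * ((s : ℚ) - u) ^ 2 - ((r : ℚ) - t) ^ 2) =
        ((r : ℚ) * u + (s : ℚ) * t) / 2) :=
  pell_addition_integral_general Δ hΔns r s t u hP hQ
end

section
/- Every integral solution (x,y) of the Pell equation X² − ΔY² = 4 gives rise to an integral solution of a first descendant: there exist integers a, b, r, s with a squarefree, ab = Δ, ar² − bs² = 4, x = ar² − 2, and y = rs. -/
private lemma sqf_neg {d : ℤ} (h : Squarefree d) : Squarefree (-d) := by
  rw [← Int.squarefree_natAbs] at h ⊢
  simpa using h

/-- Every integral solution of `X² - ΔY² = 4` gives rise to an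
integral solution of a first descendant `ar² - bs² = 4` with `a` squarefree,
`ab = Δ`, `x = ar² - 2` and `y = rs`. -/
theorem descent_exists (d : ℤ) (hsf : Squarefree d) (hd0 : d ≠ 0) (hd1 : d ≠ 1)
    (Δ : ℤ) (hΔ : Δ = if d % 4 = 1 then d else 4 * d)
    (x y : ℤ) (hxy : x ^ 2 - Δ * y ^ 2 = 4) :
    ∃ a b r s : ℤ, Squarefree a ∧ a * b = Δ ∧ a * r ^ 2 - b * s ^ 2 = 4 ∧
      x = a * r ^ 2 - 2 ∧ y = r * s := by
  have hΔ0 : Δ ≠ 0 := by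
    rw [hΔ]; split <;> simpa using hd0
  by_cases hy : y = 0
  · subst hy
    have hx : (x - 2) * (x + 2) = 0 := by nlinarith [hxy]
    rcases mul_eq_zero.mp hx with h | h
    · refine ⟨1, Δ, 2, 0, squarefree_one, by ring, by ring, by omega, by ring⟩
    · by_cases h4 : d % 4 = 1
      · refine ⟨-d, -1, 0, 2, sqf_neg hsf, ?_, by ring, by omega, by ring⟩
        rw [hΔ, if_pos h4]; ring
      · refine ⟨-d, -4, 0, 1, sqf_neg hsf, ?_, by ring, by omega, by ring⟩
        rw [hΔ, if_neg h4]; ring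
  · -- main case : y ≠ 0
    set m : ℤ := x + 2 with hm_def
    set n : ℤ := x - 2 with hn_def
    have hmn : m * n = Δ * y ^ 2 := by rw [hm_def, hn_def]; nlinarith [hxy]
    have hm0 : m ≠ 0 := by
      intro h
      have : Δ * y ^ 2 = 0 := by rw [← hmn, h, zero_mul]
      rcases mul_eq_zero.mp this with h' | h'
      · exact hΔ0 h'
      · exact hy (by simpa using h')
    have hn0 : n ≠ 0 := by
      intro h
      have : Δ * y ^ 2 = 0 := by rw [← hmn, h, mul_zero]
      rcases mul_eq_zero.mp this with h' | h'
      · exact hΔ0 h'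
      · exact hy (by simpa using h')
    set M : ℕ := m.natAbs with hM_def
    set N : ℕ := n.natAbs with hN_def
    set D : ℕ := Δ.natAbs with hD_def
    set Y : ℕ := y.natAbs with hY_def
    have hM0 : M ≠ 0 := Int.natAbs_ne_zero.mpr hm0
    have hN0 : N ≠ 0 := Int.natAbs_ne_zero.mpr hn0
    have hD0 : D ≠ 0 := Int.natAbs_ne_zero.mpr hΔ0
    have hY0 : Y ≠ 0 := Int.natAbs_ne_zero.mpr hy
    have hMN : M * N = D * Y ^ 2 := by
      rw [hM_def, hN_def, hD_def, hY_def, ← Int.natAbs_mul, ← Int.natAbs_pow,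
        ← Int.natAbs_mul, hmn]
    obtain ⟨A, R0, hAR, hAsf⟩ := Nat.sq_mul_squarefree M
    have hA0 : A ≠ 0 := hAsf.ne_zero
    have hR0 : R0 ≠ 0 := by
      intro h; rw [h] at hAR; simp at hAR; exact hM0 hAR.symm
    -- valuation equation
    have hv : ∀ p : ℕ, M.factorization p + N.factorization p
        = D.factorization p + 2 * Y.factorization p := by
      intro p
      have h1 : (M * N).factorization = M.factorization + N.factorization :=
        Nat.factorization_mul hM0 hN0
      have h2 : (D * Y ^ 2).factorization = D.factorization + 2 • Y.factorization := by
        rw [Nat.factorization_mul hD0 (pow_ne_zero 2 hY0), Nat.factorization_pow]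
      have := h1.symm.trans (by rw [hMN, h2])
      have := DFunLike.congr_fun this p
      simpa [two_mul, mul_comm] using this
    have hvM : ∀ p : ℕ, M.factorization p
        = 2 * R0.factorization p + A.factorization p := by
      intro p
      have : (R0 ^ 2 * A).factorization = 2 • R0.factorization + A.factorization := by
        rw [Nat.factorization_mul (pow_ne_zero 2 hR0) hA0, Nat.factorization_pow]
      rw [hAR] at this
      have := DFunLike.congr_fun this p
      simpa [two_mul, mul_comm] using this
    -- facts about valuations of D
    have hsfd : Squarefree d.natAbs := Int.squarefree_natAbs.mpr hsf
    have hvd_le : ∀ p : ℕ, d.natAbs.factorization p ≤ 1 :=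
      (Nat.squarefree_iff_factorization_le_one (Int.natAbs_ne_zero.mpr hd0)).mp hsfd
    have hDodd_le : ∀ p : ℕ, p ≠ 2 → D.factorization p ≤ 1 := by
      intro p hp2
      rw [hD_def, hΔ]
      split
      · exact hvd_le p
      · rw [Int.natAbs_mul]
        by_cases pp : p.Prime
        · rw [Nat.factorization_mul (by norm_num) (Int.natAbs_ne_zero.mpr hd0)]
          have h4 : (Int.natAbs 4).factorization p = 0 := by
            have h44 : (4:ℤ).natAbs = 2 ^ 2 := by norm_num
            rw [h44, Nat.prime_two.factorization_pow]
            simp [Finsupp.single_apply, Ne.symm hp2]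
          simp only [Finsupp.add_apply, h4, zero_add]
          exact hvd_le p
        · rw [Nat.factorization_eq_zero_of_not_prime _ pp]; norm_num
    -- key claim: odd 2-adic style argument
    have key2 : ∀ p : ℕ, p.Prime → M.factorization p % 2 = 1 → p ∣ D := by
      intro p pp hodd
      by_contra hpD
      have hD0p : D.factorization p = 0 := Nat.factorization_eq_zero_of_not_dvd hpD
      have hNodd : N.factorization p % 2 = 1 := by
        have := hv p; omega
      have hpM : p ∣ M := (pp.dvd_iff_one_le_factorization hM0).mpr (by omega)
      have hpN : p ∣ N := (pp.dvd_iff_one_le_factorization hN0).mpr (by omega)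
      have hpm : (p : ℤ) ∣ m := Int.natCast_dvd.mpr hpM
      have hpn : (p : ℤ) ∣ n := Int.natCast_dvd.mpr hpN
      have hp4 : (p : ℤ) ∣ 4 := by
        have : m - n = 4 := by rw [hm_def, hn_def]; ring
        rw [← this]; exact dvd_sub hpm hpn
      have hp4' : p ∣ 4 := by
        rwa [show ((4:ℤ)) = ((4:ℕ):ℤ) by norm_num, Int.natCast_dvd_natCast] at hp4
      have hp2 : p = 2 := by
        have : p ∣ 2 ^ 2 := by norm_num at hp4' ⊢; exact hp4'
        have := pp.dvd_of_dvd_pow this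
        exact (Nat.prime_dvd_prime_iff_eq pp Nat.prime_two).mp this
      subst hp2
      -- D is odd, so Δ = d with d % 4 = 1
      have hDodd : ¬ (2 ∣ D) := fun h => hpD h
      have hd4 : d % 4 = 1 := by
        by_contra h4
        apply hDodd
        have : Δ = 4 * d := by rw [hΔ, if_neg h4]
        rw [hD_def, this, Int.natAbs_mul]
        exact Dvd.dvd.mul_right (by norm_num) _
      have hΔd : Δ = d := by rw [hΔ, if_pos hd4]
      -- 2 ∣ x
      have h2m : (2:ℤ) ∣ m := Int.natCast_dvd.mpr ((Nat.prime_two.dvd_iff_one_le_factorization hM0).mpr (by omega))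
      have h2x : (2:ℤ) ∣ x := by omega
      have hx4 : x % 4 = 0 ∨ x % 4 = 2 := by omega
      rcases hx4 with hx4 | hx4
      · -- mod 16 contradiction
        obtain ⟨t, ht⟩ : (4:ℤ) ∣ x := by omega
        obtain ⟨e, he⟩ : (4:ℤ) ∣ (d - 1) := by omega
        have hd' : d = 4 * e + 1 := by omega
        have hcast : ((x : ZMod 16))^2 - (d : ZMod 16) * (y : ZMod 16)^2 = 4 := by
          have := congrArg (fun z : ℤ => (z : ZMod 16)) hxy
          push_cast at this
          rw [hΔd] at this
          exact_mod_cast this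
        rw [ht, hd'] at hcast
        push_cast at hcast
        revert hcast
        have : ∀ t' e' y' : ZMod 16, ¬ ((4*t')^2 - (4*e'+1)*y'^2 = 4) := by decide
        exact this t e y
      · -- x ≡ 2 mod 4 : both valuations ≥ 3, 8 ∣ 4 contradiction
        have h4m : (4:ℤ) ∣ m := by omega
        have h4n : (4:ℤ) ∣ n := by omega
        have h4M : 2 ≤ M.factorization 2 := by
          have : 2 ^ 2 ∣ M := Int.natCast_dvd.mp (by push_cast; omega)
          exact (Nat.Prime.pow_dvd_iff_le_factorization Nat.prime_two hM0).mp this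
        have h4N : 2 ≤ N.factorization 2 := by
          have : 2 ^ 2 ∣ N := Int.natCast_dvd.mp (by push_cast; omega)
          exact (Nat.Prime.pow_dvd_iff_le_factorization Nat.prime_two hN0).mp this
        have h8M : 2 ^ 3 ∣ M :=
          (Nat.Prime.pow_dvd_iff_le_factorization Nat.prime_two hM0).mpr (by omega)
        have h8N : 2 ^ 3 ∣ N :=
          (Nat.Prime.pow_dvd_iff_le_factorization Nat.prime_two hN0).mpr (by omega)
        have h8m : (8:ℤ) ∣ m := by
          have h := Int.natCast_dvd.mpr h8M; norm_num at h; exact h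
        have h8n : (8:ℤ) ∣ n := by
          have h := Int.natCast_dvd.mpr h8N; norm_num at h; exact h
        omega
    -- A ∣ D
    have hAD : A ∣ D := by
      rw [← Nat.factorization_le_iff_dvd hA0 hD0, Finsupp.le_def]
      intro p
      by_cases hAp : A.factorization p = 0
      · omega
      · have pp : p.Prime := by
          by_contra h
          exact hAp (Nat.factorization_eq_zero_of_not_prime _ h)
        have hA1 : A.factorization p = 1 := by
          have := (Nat.squarefree_iff_factorization_le_one hA0).mp hAsf p
          omega
        have hModd : M.factorization p % 2 = 1 := by
          have := hvM p; omega
        have := key2 p pp hModd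
        have := (pp.dvd_iff_one_le_factorization hD0).mp this
        omega
    set B : ℕ := D / A with hB_def
    have hAB : A * B = D := Nat.mul_div_cancel' hAD
    have hB0 : B ≠ 0 := by
      intro h; rw [h, mul_zero] at hAB; exact hD0 hAB.symm
    have hvD : ∀ p : ℕ, D.factorization p = A.factorization p + B.factorization p := by
      intro p
      rw [← hAB, Nat.factorization_mul hA0 hB0]
      simp
    -- R0 ∣ Y
    have hRY : R0 ∣ Y := by
      rw [← Nat.factorization_le_iff_dvd hR0 hY0, Finsupp.le_def]
      intro p
      by_contra hlt
      push_neg at hlt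
      have pp : p.Prime := by
        by_contra h
        rw [Nat.factorization_eq_zero_of_not_prime R0 h] at hlt; omega
      have hk1 : 1 ≤ R0.factorization p := by omega
      -- B valuation bound
      have hvB : N.factorization p + 2 ≤ B.factorization p := by
        have h1 := hv p
        have h2 := hvM p
        have h3 := hvD p
        omega
      have hp2 : p = 2 := by
        by_contra hp2
        have := hDodd_le p hp2
        have := hvD p
        omega
      subst hp2
      -- 2 ≤ v2 B ≤ v2 D so Δ = 4d
      have hΔ4 : Δ = 4 * d := by
        by_contra h
        have hd4 : d % 4 = 1 := by
          by_contra h4; exact h (by rw [hΔ, if_neg h4])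
        have hΔd : Δ = d := by rw [hΔ, if_pos hd4]
        have hdodd : ¬ (2 ∣ D) := by
          rw [hD_def, hΔd]
          omega
        have : D.factorization 2 = 0 := Nat.factorization_eq_zero_of_not_dvd hdodd
        have := hvD 2
        omega
      have hvD2 : D.factorization 2 = 2 + d.natAbs.factorization 2 := by
        rw [hD_def, hΔ4, Int.natAbs_mul,
          Nat.factorization_mul (by norm_num) (Int.natAbs_ne_zero.mpr hd0)]
        have h4 : (Int.natAbs 4) = 2 ^ 2 := by norm_num
        simp only [Finsupp.add_apply, h4, Nat.prime_two.factorization_pow]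
        simp
      have hvD2le : D.factorization 2 ≤ 3 := by
        have := hvd_le 2; omega
      -- 2 ∣ M hence 2 ∣ m hence x even hence 2 ∣ n hence v2 N ≥ 1
      have h2M : 2 ∣ M := by
        refine (Nat.prime_two.dvd_iff_one_le_factorization hM0).mpr ?_
        have := hvM 2; omega
      have h2m : (2:ℤ) ∣ m := Int.natCast_dvd.mpr h2M
      have h2n : (2:ℤ) ∣ n := by omega
      have h2N : 2 ∣ N := Int.natCast_dvd.mp (by exact_mod_cast h2n)
      have hvN1 : 1 ≤ N.factorization 2 :=
        (Nat.prime_two.dvd_iff_one_le_factorization hN0).mp h2N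
      -- then v2 B = 3, v2 N = 1
      have hvB3 : B.factorization 2 = 3 ∧ N.factorization 2 = 1 := by
        have := hvD 2; omega
      -- v2 N = 1 means n ≡ 2 mod 4
      have h4N : ¬ (4 ∣ N) := by
        intro h
        have : 2 ^ 2 ∣ N := by norm_num at h ⊢; exact h
        have := (Nat.Prime.pow_dvd_iff_le_factorization Nat.prime_two hN0).mp this
        omega
      have h4n : ¬ ((4:ℤ) ∣ n) := by
        intro h
        exact h4N (Int.natCast_dvd.mp (by exact_mod_cast h))
      -- so x ≡ 0 mod 4, m ≡ 2 mod 4, v2 M = 1 : contradiction with v2 M ≥ 2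
      have h4m : ¬ ((4:ℤ) ∣ m) := by omega
      have h4M : 2 ^ 2 ∣ M := by
        refine (Nat.Prime.pow_dvd_iff_le_factorization Nat.prime_two hM0).mpr ?_
        have := hvM 2; omega
      refine h4m ?_
      have h := Int.natCast_dvd.mpr h4M
      norm_num at h
      exact h
    -- assemble integer solution
    set a : ℤ := m.sign * A with ha_def
    have haabs : a.natAbs = A := by
      rw [ha_def, Int.natAbs_mul, Int.natAbs_sign_of_ne_zero hm0, one_mul, Int.natAbs_natCast]
    have hasf : Squarefree a := by
      rw [← Int.squarefree_natAbs, haabs]; exact hAsf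
    have ha0 : a ≠ 0 := hasf.ne_zero
    have haΔ : a ∣ Δ := by
      rw [← Int.natAbs_dvd_natAbs, haabs]; exact hAD
    set r : ℤ := (R0 : ℤ) with hr_def
    have hr0 : r ≠ 0 := by rw [hr_def]; exact_mod_cast hR0
    have ham : a * r ^ 2 = m := by
      have : ((R0:ℤ)) ^ 2 * (A:ℤ) = (M:ℤ) := by exact_mod_cast hAR
      rw [ha_def, hr_def]
      calc m.sign * (A:ℤ) * (R0:ℤ) ^ 2 = m.sign * ((R0:ℤ) ^ 2 * (A:ℤ)) := by ring
        _ = m.sign * (M:ℤ) := by rw [this]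
        _ = m := Int.sign_mul_natAbs m
    have hry : r ∣ y := by
      rw [← Int.natAbs_dvd_natAbs, hr_def, Int.natAbs_natCast]; exact hRY
    set s : ℤ := y / r with hs_def
    have hys : y = r * s := (Int.mul_ediv_cancel' hry).symm
    set b : ℤ := Δ / a with hb_def
    have hab : a * b = Δ := Int.mul_ediv_cancel' haΔ
    have key : r ^ 2 * n = b * y ^ 2 := by
      have h1 : a * (r ^ 2 * n) = a * (b * y ^ 2) := by
        calc a * (r ^ 2 * n) = (a * r ^ 2) * n := by ring
          _ = m * n := by rw [ham]
          _ = Δ * y ^ 2 := hmn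
          _ = (a * b) * y ^ 2 := by rw [hab]
          _ = a * (b * y ^ 2) := by ring
      exact mul_left_cancel₀ ha0 h1
    have hbn : b * s ^ 2 = n := by
      have h1 : r ^ 2 * (b * s ^ 2) = r ^ 2 * n := by
        rw [key, hys]; ring
      exact mul_left_cancel₀ (pow_ne_zero 2 hr0) h1
    refine ⟨a, b, r, s, hasf, hab, ?_, ?_, hys⟩
    · rw [ham, hbn, hm_def, hn_def]; ring
    · rw [ham, hm_def]; ring
end

section
/- The Weil map α : C(ℚ) → ℚ^×/ℚ^×² is a group homomorphism: for all P, Q ∈ C(ℚ) one has α(P + Q) = α(P)·α(Q) in ℚ^×/ℚ^×². -/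
open Filter Real

/-- The defining equation of the Pell conic `X² - ΔY² = 4`. -/
def PellSol (Δ : ℚ) (P : ℚ × ℚ) : Prop := P.1 ^ 2 - Δ * P.2 ^ 2 = 4

/-- The rational points on the Pell conic `X² - ΔY² = 4`. -/
def Conic (Δ : ℚ) : Type := {P : ℚ × ℚ // PellSol Δ P}

namespace Conic

variable {Δ : ℚ}

/-- Addition on the Pell conic. -/
instance : Add (Conic Δ) :=
  ⟨fun P Q => ⟨((P.val.1 * Q.val.1 + Δ * P.val.2 * Q.val.2) / 2,
    (P.val.1 * Q.val.2 + P.val.2 * Q.val.1) / 2), by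
      have hP := P.property
      have hQ := Q.property
      unfold PellSol at *
      dsimp only
      linear_combination ((Q.val.1 ^ 2 - Δ * Q.val.2 ^ 2) / 4) * hP + hQ⟩⟩

/-- The neutral element `(2,0)` of the Pell conic. -/
instance : Zero (Conic Δ) := ⟨⟨(2, 0), by unfold PellSol; norm_num⟩⟩

/-- The negative of a point on the Pell conic. -/
instance : Neg (Conic Δ) :=
  ⟨fun P => ⟨(P.val.1, -P.val.2), by
    have hP := P.property
    unfold PellSol at *
    dsimp only
    linear_combination hP⟩⟩

@[simp] lemma add_val (P Q : Conic Δ) :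
    (P + Q).val = ((P.val.1 * Q.val.1 + Δ * P.val.2 * Q.val.2) / 2,
      (P.val.1 * Q.val.2 + P.val.2 * Q.val.1) / 2) := rfl

@[simp] lemma zero_val : ((0 : Conic Δ)).val = (2, 0) := rfl

@[simp] lemma neg_val (P : Conic Δ) : (-P).val = (P.val.1, -P.val.2) := rfl

protected lemma add_assoc' (P Q R : Conic Δ) : P + Q + R = P + (Q + R) := by
  apply Subtype.ext
  rw [Prod.ext_iff, add_val, add_val, add_val, add_val]
  constructor <;> (dsimp only; ring)

protected lemma zero_add' (P : Conic Δ) : 0 + P = P := by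
  apply Subtype.ext
  rw [Prod.ext_iff, add_val, zero_val]
  constructor <;> (dsimp only; ring)

protected lemma add_zero' (P : Conic Δ) : P + 0 = P := by
  apply Subtype.ext
  rw [Prod.ext_iff, add_val, zero_val]
  constructor <;> (dsimp only; ring)

protected lemma neg_add_cancel' (P : Conic Δ) : -P + P = 0 := by
  have hP := P.property
  unfold PellSol at hP
  apply Subtype.ext
  rw [Prod.ext_iff, add_val, neg_val, zero_val]
  constructor
  · dsimp only
    linear_combination hP / 2
  · dsimp only; ring

protected lemma add_comm' (P Q : Conic Δ) : P + Q = Q + P := by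
  apply Subtype.ext
  rw [Prod.ext_iff, add_val, add_val]
  constructor <;> (dsimp only; ring)

/-- The group structure on the rational points of the Pell conic. -/
instance : AddCommGroup (Conic Δ) where
  add := (· + ·)
  zero := 0
  neg := Neg.neg
  nsmul := nsmulRec
  zsmul := zsmulRec
  add_assoc := Conic.add_assoc'
  zero_add := Conic.zero_add'
  add_zero := Conic.add_zero'
  neg_add_cancel := Conic.neg_add_cancel'
  add_comm := Conic.add_comm'

end Conic

/-- The Weil map `α : C(ℚ) → ℚ^×/ℚ^×²` on the Pell conic `X² - ΔY² = 4`,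
sending `(x,y)` to the class of `x + 2` if `x ≠ -2`, and `(-2,0)` to the class of `-Δ`. -/
noncomputable def weilMap (Δ : ℚ) (hΔ : Δ ≠ 0) (P : Conic Δ) :
    ℚˣ ⧸ (powMonoidHom 2 : ℚˣ →* ℚˣ).range :=
  if h : P.val.1 = -2 then
    QuotientGroup.mk (Units.mk0 (-Δ) (neg_ne_zero.mpr hΔ))
  else
    QuotientGroup.mk (Units.mk0 (P.val.1 + 2) (fun hc => h (by linarith)))

/-!
For `R = P + Q` the coordinates satisfy `(x_P + 2)(x_Q + 2)(x_R + 2) = (x_P + x_Q + x_R + 2)²`,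
which settles the case where none of `P`, `Q`, `P + Q` is the `2`-torsion point `T = (-2, 0)`.
Adding `T` negates both coordinates, and `(-Δ)(x + 2)(2 - x) = (Δy)²` gives `α(T + Q) = α(T)α(Q)`;
the case `P + Q = T` reduces to this since `α(-P) = α(P)` and every square class has order two.
-/

lemma QuotientGroup.mul_self_eq_one_of_powMonoidHom_two {G : Type*} [CommGroup G]
    (g : G ⧸ (powMonoidHom 2 : G →* G).range) : g * g = 1 := by
  induction g using QuotientGroup.induction_on with
  | H g => exact (QuotientGroup.eq_one_iff _).mpr ⟨g, by simp [sq]⟩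

lemma QuotientGroup.mk_mk0_eq_mul_of_mul_mul_eq_sq {K : Type*} [Field K] {a b c s : K}
    (ha : a ≠ 0) (hb : b ≠ 0) (hc : c ≠ 0) (h : a * b * c = s ^ 2) :
    (QuotientGroup.mk (Units.mk0 a ha) : Kˣ ⧸ (powMonoidHom 2 : Kˣ →* Kˣ).range) =
      QuotientGroup.mk (Units.mk0 b hb) * QuotientGroup.mk (Units.mk0 c hc) := by
  rw [← QuotientGroup.mk_mul, QuotientGroup.eq]
  refine ⟨Units.mk0 (s / a) (div_ne_zero ?_ ha), Units.ext ?_⟩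
  · rintro rfl
    simp [ha, hb, hc] at h
  · simp only [powMonoidHom_apply, Units.val_pow_eq_pow_val, Units.val_mul,
      Units.val_inv_eq_inv_val, Units.val_mk0]
    field_simp
    linear_combination -h

namespace Conic

variable {Δ : ℚ}

lemma pell (P : Conic Δ) : P.val.1 ^ 2 - Δ * P.val.2 ^ 2 = 4 := P.property

def twoTorsion : Conic Δ := ⟨(-2, 0), by unfold PellSol; norm_num⟩

@[simp] lemma twoTorsion_val : (twoTorsion : Conic Δ).val = (-2, 0) := rfl

lemma twoTorsion_add_val (P : Conic Δ) : (twoTorsion + P).val = (-P.val.1, -P.val.2) := by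
  rw [add_val, twoTorsion_val, Prod.ext_iff]
  constructor <;> (dsimp only; ring)

lemma snd_eq_zero_of_fst_sq (hΔ : Δ ≠ 0) {P : Conic Δ} (h : P.val.1 ^ 2 = 4) :
    P.val.2 = 0 := by
  have : Δ * P.val.2 ^ 2 = 0 := by linear_combination h - P.pell
  simpa [hΔ] using this

lemma eq_twoTorsion_of_fst_eq (hΔ : Δ ≠ 0) {P : Conic Δ} (h : P.val.1 = -2) :
    P = twoTorsion := by
  have hy : P.val.2 = 0 := snd_eq_zero_of_fst_sq hΔ (by rw [h]; norm_num)
  exact Subtype.ext (Prod.ext h hy)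

lemma eq_zero_of_fst_eq (hΔ : Δ ≠ 0) {P : Conic Δ} (h : P.val.1 = 2) : P = 0 := by
  have hy : P.val.2 = 0 := snd_eq_zero_of_fst_sq hΔ (by rw [h]; norm_num)
  exact Subtype.ext (Prod.ext h hy)

lemma twoTorsion_add_self : (twoTorsion + twoTorsion : Conic Δ) = 0 :=
  Subtype.ext (by rw [twoTorsion_add_val]; norm_num)

lemma fst_add_two_mul_fst_add_two_mul_fst_add_two (P Q : Conic Δ) :
    (P.val.1 + 2) * (Q.val.1 + 2) * ((P + Q).val.1 + 2) =
      (P.val.1 + Q.val.1 + (P + Q).val.1 + 2) ^ 2 := by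
  rw [add_val]
  linear_combination (Δ * Q.val.2 ^ 2 / 4) * P.pell + (P.val.1 ^ 2 / 4 - 1) * Q.pell

end Conic

section WeilMap

open Conic

variable {Δ : ℚ}

lemma weilMap_of_fst_ne (hΔ : Δ ≠ 0) {P : Conic Δ} (h : P.val.1 ≠ -2) :
    weilMap Δ hΔ P =
      QuotientGroup.mk (Units.mk0 (P.val.1 + 2) (fun hc => h (eq_neg_of_add_eq_zero_left hc))) :=
  dif_neg h

lemma weilMap_twoTorsion (hΔ : Δ ≠ 0) :
    weilMap Δ hΔ twoTorsion = QuotientGroup.mk (Units.mk0 (-Δ) (neg_ne_zero.mpr hΔ)) :=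
  dif_pos rfl

lemma weilMap_zero (hΔ : Δ ≠ 0) : weilMap Δ hΔ 0 = 1 := by
  rw [weilMap_of_fst_ne hΔ (by norm_num)]
  exact (QuotientGroup.eq_one_iff _).mpr ⟨Units.mk0 2 two_ne_zero, Units.ext (by norm_num)⟩

lemma weilMap_neg (hΔ : Δ ≠ 0) (P : Conic Δ) : weilMap Δ hΔ (-P) = weilMap Δ hΔ P := rfl

lemma weilMap_twoTorsion_add (hΔ : Δ ≠ 0) (Q : Conic Δ) :
    weilMap Δ hΔ (twoTorsion + Q) = weilMap Δ hΔ twoTorsion * weilMap Δ hΔ Q := by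
  by_cases h2 : Q.val.1 = 2
  · rw [eq_zero_of_fst_eq hΔ h2, add_zero, weilMap_zero, mul_one]
  by_cases hm2 : Q.val.1 = -2
  · rw [eq_twoTorsion_of_fst_eq hΔ hm2, twoTorsion_add_self, weilMap_zero,
      QuotientGroup.mul_self_eq_one_of_powMonoidHom_two]
  have hTQ : (twoTorsion + Q).val.1 ≠ -2 := by
    rw [twoTorsion_add_val]
    simpa using h2
  rw [weilMap_of_fst_ne hΔ hTQ, weilMap_twoTorsion, weilMap_of_fst_ne hΔ hm2]
  refine QuotientGroup.mk_mk0_eq_mul_of_mul_mul_eq_sq (s := Δ * Q.val.2) _ _ _ ?_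
  rw [twoTorsion_add_val]
  linear_combination Δ * Q.pell

lemma weilMap_add_of_fst_ne (hΔ : Δ ≠ 0) {P Q : Conic Δ} (hP : P.val.1 ≠ -2)
    (hQ : Q.val.1 ≠ -2) (hPQ : (P + Q).val.1 ≠ -2) :
    weilMap Δ hΔ (P + Q) = weilMap Δ hΔ P * weilMap Δ hΔ Q := by
  rw [weilMap_of_fst_ne hΔ hP, weilMap_of_fst_ne hΔ hQ, weilMap_of_fst_ne hΔ hPQ]
  refine QuotientGroup.mk_mk0_eq_mul_of_mul_mul_eq_sq (s := P.val.1 + Q.val.1 + (P + Q).val.1 + 2)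
    _ _ _ ?_
  linear_combination fst_add_two_mul_fst_add_two_mul_fst_add_two P Q

theorem weilMap_add (hΔ : Δ ≠ 0) (P Q : Conic Δ) :
    weilMap Δ hΔ (P + Q) = weilMap Δ hΔ P * weilMap Δ hΔ Q := by
  by_cases hP : P.val.1 = -2
  · rw [eq_twoTorsion_of_fst_eq hΔ hP, weilMap_twoTorsion_add]
  by_cases hQ : Q.val.1 = -2
  · rw [eq_twoTorsion_of_fst_eq hΔ hQ, add_comm, weilMap_twoTorsion_add, mul_comm]
  by_cases hPQ : (P + Q).val.1 = -2
  · have hsum := eq_twoTorsion_of_fst_eq hΔ hPQ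
    have hQ' : Q = twoTorsion + -P := by rw [← hsum]; abel
    rw [hsum, hQ', weilMap_twoTorsion_add, weilMap_neg, mul_left_comm,
      QuotientGroup.mul_self_eq_one_of_powMonoidHom_two, mul_one]
  exact weilMap_add_of_fst_ne hΔ hP hQ hPQ

end WeilMap

theorem weilMap_hom_general (Δ : ℤ) (hΔ0 : (Δ : ℚ) ≠ 0) (P Q : Conic (Δ : ℚ)) :
    weilMap (Δ : ℚ) hΔ0 (P + Q) = weilMap (Δ : ℚ) hΔ0 P * weilMap (Δ : ℚ) hΔ0 Q :=
  weilMap_add hΔ0 P Q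

/-- The Weil map `α : C(ℚ) → ℚ^×/ℚ^×²` is a group homomorphism. -/
theorem weilMap_hom (d : ℤ) (hsf : Squarefree d) (hd0 : d ≠ 0) (hd1 : d ≠ 1)
    (Δ : ℤ) (hΔ : Δ = if d % 4 = 1 then d else 4 * d)
    (hΔ0 : (Δ : ℚ) ≠ 0) (P Q : Conic (Δ : ℚ)) :
    weilMap (Δ : ℚ) hΔ0 (P + Q) = weilMap (Δ : ℚ) hΔ0 P * weilMap (Δ : ℚ) hΔ0 Q :=
  weilMap_hom_general Δ hΔ0 P Q
end

section
/- Weak theorem of Mordell–Weil for Pell conics: the quotient group C(ℤ)/2C(ℤ) is finite. -/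
open Filter Real

section Extra

namespace Conic

variable {Δ : ℚ}

/-- The naive height of a point on a Pell conic: `H(x,y) = max(|num x|, den x)`. -/
noncomputable def height (P : Conic Δ) : ℝ :=
  max (|P.val.1.num| : ℝ) (P.val.1.den : ℝ)

/-- The logarithmic height `h₀(P) = log H(P)`. -/
noncomputable def logHeight (P : Conic Δ) : ℝ := Real.log (height P)

/-- The canonical height `h(P) = lim 2⁻ⁿ h₀(2ⁿ P)`. -/
noncomputable def canHeight (P : Conic Δ) : ℝ :=
  limUnder atTop (fun n : ℕ => logHeight ((2 ^ n) • P) / 2 ^ n)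

end Conic

/-- The integral points form a subgroup of the group of rational points on
the Pell conic `X² - ΔY² = 4` (for an integral `Δ`). -/
def intPoints (Δ : ℤ) : AddSubgroup (Conic (Δ : ℚ)) where
  carrier := {P | ∃ a b : ℤ, P.val = ((a : ℚ), (b : ℚ))}
  zero_mem' := ⟨2, 0, by rw [Conic.zero_val]; norm_num⟩
  neg_mem' := by
    rintro P ⟨a, b, h⟩
    exact ⟨a, -b, by rw [Conic.neg_val, h]; push_cast; rfl⟩
  add_mem' := by
    rintro P Q ⟨a, b, hP⟩ ⟨c, e, hQ⟩
    have hPp := P.property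
    have hQp := Q.property
    unfold PellSol at hPp hQp
    rw [hP] at hPp
    rw [hQ] at hQp
    dsimp only at hPp hQp
    have ha : a ^ 2 - Δ * b ^ 2 = 4 := by exact_mod_cast hPp
    have hc : c ^ 2 - Δ * e ^ 2 = 4 := by exact_mod_cast hQp
    have key : ∀ A B C E F : ZMod 2, A ^ 2 - F * B ^ 2 = 4 → C ^ 2 - F * E ^ 2 = 4 →
        (A * C + F * B * E = 0 ∧ A * E + B * C = 0) := by decide
    have ha2 : (a : ZMod 2) ^ 2 - (Δ : ZMod 2) * (b : ZMod 2) ^ 2 = 4 := by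
      have := congrArg (fun z : ℤ => (z : ZMod 2)) ha
      push_cast at this
      exact_mod_cast this
    have hc2 : (c : ZMod 2) ^ 2 - (Δ : ZMod 2) * (e : ZMod 2) ^ 2 = 4 := by
      have := congrArg (fun z : ℤ => (z : ZMod 2)) hc
      push_cast at this
      exact_mod_cast this
    obtain ⟨k1, k2⟩ := key (a : ZMod 2) (b : ZMod 2) (c : ZMod 2) (e : ZMod 2) (Δ : ZMod 2) ha2 hc2
    have d1 : (2 : ℤ) ∣ (a * c + Δ * b * e) := by
      have : ((a * c + Δ * b * e : ℤ) : ZMod 2) = 0 := by push_cast; linear_combination k1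
      exact_mod_cast (ZMod.intCast_zmod_eq_zero_iff_dvd _ 2).mp this
    have d2 : (2 : ℤ) ∣ (a * e + b * c) := by
      have : ((a * e + b * c : ℤ) : ZMod 2) = 0 := by push_cast; linear_combination k2
      exact_mod_cast (ZMod.intCast_zmod_eq_zero_iff_dvd _ 2).mp this
    obtain ⟨X, hX⟩ := d1
    obtain ⟨Y, hY⟩ := d2
    refine ⟨X, Y, ?_⟩
    rw [Conic.add_val, hP, hQ]
    have hX' : ((a : ℚ) * c + Δ * b * e) = 2 * X := by exact_mod_cast congrArg (fun z : ℤ => (z : ℚ)) hX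
    have hY' : ((a : ℚ) * e + b * c) = 2 * Y := by exact_mod_cast congrArg (fun z : ℤ => (z : ℚ)) hY
    rw [Prod.ext_iff]
    constructor
    · dsimp only
      rw [div_eq_iff (by norm_num : (2:ℚ) ≠ 0)]
      linarith [hX']
    · dsimp only
      rw [div_eq_iff (by norm_num : (2:ℚ) ≠ 0)]
      linarith [hY']

end Extra

/-!
For `Δ < 0` the equation `x² - Δy² = 4` has only finitely many integral solutions. For `Δ > 0`,
`(x, y) ↦ log |(x + y√Δ)/2|` is a homomorphism `C(ℤ) → ℝ`. If its value at `P` is small, then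
both `(x + y√Δ)/2` and its inverse `(x - y√Δ)/2` are bounded, hence so are `x` and `y`: the
kernel is finite and the image is a discrete, hence cyclic, subgroup of `ℝ`. Either way `C(ℤ)` is
finitely generated, and `G/2G` is finite for every finitely generated abelian group `G`.
-/

theorem AddMonoidHom.fg_of_fg_range_of_fg_ker {G H : Type*} [AddCommGroup G] [AddCommGroup H]
    (f : G →+ H) (hrange : f.range.FG) (hker : f.ker.FG) : AddGroup.FG G := by
  rw [← Module.Finite.iff_addGroup_fg, Module.finite_def]
  refine Submodule.fg_of_fg_map_of_fg_inf_ker f.toIntLinearMap ?_ ?_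
  · rwa [Submodule.map_top, Submodule.fg_iff_addSubgroup_fg]
  · rwa [top_inf_eq, Submodule.fg_iff_addSubgroup_fg]

/-- A dense subgroup of `ℝ` would have infinitely many elements in `(0, r)`. -/
theorem AddMonoidHom.exists_range_eq_closure_singleton_of_finite {G : Type*} [AddGroup G]
    (f : G →+ ℝ) {r : ℝ} (hr : 0 < r) (hfin : {g | |f g| < r}.Finite) :
    ∃ a, f.range = AddSubgroup.closure {a} := by
  refine (AddSubgroup.dense_or_cyclic f.range).resolve_left fun hdense => ?_
  have hsmall : (f '' {g | |f g| < r}).Finite := hfin.image f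
  obtain ⟨_, ⟨g, rfl⟩, hg, hg_small⟩ := hdense.exists_mem_open
    (isOpen_Ioo.sdiff hsmall.isClosed) ((Set.Ioo_infinite hr).sdiff hsmall).nonempty
  exact hg_small ⟨g, abs_lt.2 ⟨by linarith [hg.1], hg.2⟩, rfl⟩

theorem AddMonoidHom.fg_of_finite_setOf_abs_lt {G : Type*} [AddCommGroup G] (f : G →+ ℝ)
    {r : ℝ} (hr : 0 < r) (hfin : {g | |f g| < r}.Finite) : AddGroup.FG G := by
  obtain ⟨a, ha⟩ := f.exists_range_eq_closure_singleton_of_finite hr hfin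
  refine f.fg_of_fg_range_of_fg_ker ⟨{a}, by simp [ha]⟩ ?_
  have : Finite f.ker := (hfin.subset fun g (hg : f g = 0) => by simp [hg, hr]).to_subtype
  exact (AddGroup.fg_iff_addSubgroup_fg _).1 AddGroup.fg_of_finite

theorem AddCommGroup.finite_quotient_range_nsmul {G : Type*} [AddCommGroup G] [AddGroup.FG G]
    {n : ℕ} (hn : n ≠ 0) :
    Finite (G ⧸ (AddMonoidHom.mk' (fun g : G => n • g) (fun a b => smul_add n a b)).range) := by
  refine AddCommGroup.finite_of_fg_isAddTorsion _ fun x => ?_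
  refine isOfFinAddOrder_iff_nsmul_eq_zero.2 ⟨n, Nat.pos_of_ne_zero hn, ?_⟩
  induction x using QuotientAddGroup.induction_on with
  | H g => exact (QuotientAddGroup.eq_zero_iff _).2 ⟨g, rfl⟩

namespace Conic

variable {Δ : ℚ}

lemma abs_coords_le_two_of_le_neg_one (hΔ : Δ ≤ -1) (P : Conic Δ) :
    |P.val.1| ≤ 2 ∧ |P.val.2| ≤ 2 := by
  have hP : P.val.1 ^ 2 - Δ * P.val.2 ^ 2 = 4 := P.property
  constructor <;> refine abs_le_of_sq_le_sq ?_ zero_le_two <;>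
    nlinarith [sq_nonneg P.val.1, sq_nonneg P.val.2]

/-- For `0 ≤ Δ`, the point `(x, y)` read as the norm-one element `(x + y√Δ)/2` of `ℚ(√Δ) ⊆ ℝ`,
where the group law of the conic becomes multiplication. -/
noncomputable def realEmbedding (P : Conic Δ) : ℝ :=
  ((P.val.1 : ℝ) + (P.val.2 : ℝ) * √(Δ : ℝ)) / 2

lemma realEmbedding_zero : realEmbedding (0 : Conic Δ) = 1 := by
  simp [realEmbedding]

lemma realEmbedding_add (hΔ : 0 ≤ Δ) (P Q : Conic Δ) :
    realEmbedding (P + Q) = realEmbedding P * realEmbedding Q := by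
  have hsqrt : √(Δ : ℝ) ^ 2 = Δ := Real.sq_sqrt (by exact_mod_cast hΔ)
  simp only [realEmbedding, add_val]
  push_cast
  linear_combination (-((P.val.2 : ℝ) * Q.val.2) / 4) * hsqrt

lemma realEmbedding_mul_realEmbedding_neg (hΔ : 0 ≤ Δ) (P : Conic Δ) :
    realEmbedding P * realEmbedding (-P) = 1 := by
  rw [← realEmbedding_add hΔ, add_neg_cancel, realEmbedding_zero]

lemma realEmbedding_ne_zero (hΔ : 0 ≤ Δ) (P : Conic Δ) : realEmbedding P ≠ 0 :=
  left_ne_zero_of_mul_eq_one (realEmbedding_mul_realEmbedding_neg hΔ P)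

lemma realEmbedding_add_realEmbedding_neg (P : Conic Δ) :
    realEmbedding P + realEmbedding (-P) = P.val.1 := by
  simp only [realEmbedding, neg_val]
  push_cast
  ring

lemma realEmbedding_sub_realEmbedding_neg (P : Conic Δ) :
    realEmbedding P - realEmbedding (-P) = P.val.2 * √(Δ : ℝ) := by
  simp only [realEmbedding, neg_val]
  push_cast
  ring

noncomputable def logEmbedding (hΔ : 0 ≤ Δ) : Conic Δ →+ ℝ :=
  AddMonoidHom.mk' (fun P => Real.log (realEmbedding P)) fun P Q => by
    rw [realEmbedding_add hΔ,
      Real.log_mul (realEmbedding_ne_zero hΔ P) (realEmbedding_ne_zero hΔ Q)]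

lemma abs_realEmbedding_lt_two (hΔ : 0 ≤ Δ) {P : Conic Δ}
    (hP : logEmbedding hΔ P < Real.log 2) : |realEmbedding P| < 2 := by
  rw [logEmbedding, AddMonoidHom.mk'_apply, ← Real.log_abs] at hP
  exact (Real.log_lt_log_iff (abs_pos.2 (realEmbedding_ne_zero hΔ P)) two_pos).1 hP

lemma abs_coords_lt_four_of_abs_logEmbedding_lt (hΔ : 1 ≤ Δ) (P : Conic Δ)
    (hP : |logEmbedding (zero_le_one.trans hΔ) P| < Real.log 2) :
    |P.val.1| < 4 ∧ |P.val.2| < 4 := by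
  have hP_neg : |logEmbedding (zero_le_one.trans hΔ) (-P)| < Real.log 2 := by
    rwa [map_neg, abs_neg]
  have hε := abs_realEmbedding_lt_two _ (abs_lt.1 hP).2
  have hε_neg := abs_realEmbedding_lt_two _ (abs_lt.1 hP_neg).2
  have hx : |(P.val.1 : ℝ)| < 4 := by
    rw [← realEmbedding_add_realEmbedding_neg]
    linarith [abs_add_le (realEmbedding P) (realEmbedding (-P))]
  have hy : |(P.val.2 : ℝ)| * √(Δ : ℝ) < 4 := by
    rw [← abs_of_nonneg (Real.sqrt_nonneg (Δ : ℝ)), ← abs_mul,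
      ← realEmbedding_sub_realEmbedding_neg]
    linarith [abs_sub (realEmbedding P) (realEmbedding (-P))]
  have hsqrt : 1 ≤ √(Δ : ℝ) := Real.one_le_sqrt.2 (by exact_mod_cast hΔ)
  constructor
  · exact_mod_cast hx
  · exact_mod_cast (le_mul_of_one_le_right (abs_nonneg _) hsqrt).trans_lt hy

end Conic

theorem intPoints_finite_setOf_abs_coords_le (Δ : ℤ) (B : ℤ) :
    {P : intPoints Δ | |P.val.val.1| ≤ B ∧ |P.val.val.2| ≤ B}.Finite := by
  have hbox : ((fun p : ℤ × ℤ => ((p.1 : ℚ), (p.2 : ℚ))) ''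
      (Set.Icc (-B) B ×ˢ Set.Icc (-B) B)).Finite :=
    ((Set.finite_Icc _ _).prod (Set.finite_Icc _ _)).image _
  refine (hbox.preimage (Subtype.val_injective.comp Subtype.val_injective).injOn).subset ?_
  rintro P ⟨hx, hy⟩
  obtain ⟨a, b, hab⟩ := P.property
  rw [hab] at hx hy
  dsimp only at hx hy
  have ha : |a| ≤ B := by exact_mod_cast hx
  have hb : |b| ≤ B := by exact_mod_cast hy
  exact ⟨(a, b), ⟨abs_le.1 ha, abs_le.1 hb⟩, hab.symm⟩

theorem intPoints_finite_of_neg {Δ : ℤ} (hΔ : Δ < 0) : Finite (intPoints Δ) := by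
  have hΔ1 : (Δ : ℚ) ≤ -1 := by exact_mod_cast Int.le_sub_one_of_lt hΔ
  rw [← Set.finite_univ_iff]
  refine (intPoints_finite_setOf_abs_coords_le Δ 2).subset fun P _ => ?_
  exact_mod_cast Conic.abs_coords_le_two_of_le_neg_one hΔ1 P.val

theorem intPoints_fg_of_pos {Δ : ℤ} (hΔ : 0 < Δ) : AddGroup.FG (intPoints Δ) := by
  have hΔ1 : (1 : ℚ) ≤ Δ := by exact_mod_cast hΔ
  let ℓ := (Conic.logEmbedding (zero_le_one.trans hΔ1)).comp (intPoints Δ).subtype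
  refine ℓ.fg_of_finite_setOf_abs_lt (Real.log_pos one_lt_two)
    ((intPoints_finite_setOf_abs_coords_le Δ 4).subset fun P hP => ?_)
  obtain ⟨hx, hy⟩ := Conic.abs_coords_lt_four_of_abs_logEmbedding_lt hΔ1 P.val hP
  exact ⟨by exact_mod_cast hx.le, by exact_mod_cast hy.le⟩

theorem intPoints_fg {Δ : ℤ} (hΔ : Δ ≠ 0) : AddGroup.FG (intPoints Δ) := by
  rcases hΔ.lt_or_gt with hneg | hpos
  · have := intPoints_finite_of_neg hneg
    exact AddGroup.fg_of_finite
  · exact intPoints_fg_of_pos hpos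

theorem weak_mordell_weil_general (d : ℤ) (hd0 : d ≠ 0)
    (Δ : ℤ) (hΔ : Δ = if d % 4 = 1 then d else 4 * d) :
    Finite ((↥(intPoints Δ)) ⧸ (AddMonoidHom.range
      (AddMonoidHom.mk' (fun g : ↥(intPoints Δ) => 2 • g)
        (fun a b => smul_add 2 a b)))) := by
  have : AddGroup.FG (intPoints Δ) := intPoints_fg (by rw [hΔ]; split_ifs <;> omega)
  exact AddCommGroup.finite_quotient_range_nsmul two_ne_zero

/-- Weak Mordell–Weil for Pell conics: `C(ℤ)/2C(ℤ)` is finite. -/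
theorem weak_mordell_weil (d : ℤ) (hsf : Squarefree d) (hd0 : d ≠ 0) (hd1 : d ≠ 1)
    (Δ : ℤ) (hΔ : Δ = if d % 4 = 1 then d else 4 * d) :
    Finite ((↥(intPoints Δ)) ⧸ (AddMonoidHom.range
      (AddMonoidHom.mk' (fun g : ↥(intPoints Δ) => 2 • g)
        (fun a b => smul_add 2 a b)))) :=
  weak_mordell_weil_general d hd0 Δ hΔ
end

section
/- For every rational point P ∈ C(ℚ) on the Pell conic one has (1/4)·H(P)² ≤ H(2P) ≤ 4·H(P)². -/
open Filter Real

/-!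
Using the conic equation, doubling acts on the first coordinate by `x ↦ x² - 2`. If `x = r/s` in
lowest terms then `x² - 2 = (r² - 2s²)/s²` is again in lowest terms, since `gcd(r² - 2s², s²) = 1`,
so `H(2P) = max(|r² - 2s²|, s²)`, and this lies between `max(r², s²)/3` and `2 max(r², s²)`.
-/

namespace Rat

theorem num_sub_intCast (q : ℚ) (n : ℤ) : (q - n).num = q.num - n * q.den := by
  have h : ((q - n).num : ℚ) = q.num - n * q.den := by
    rw [← mul_den_eq_num, sub_intCast_den, sub_mul, mul_den_eq_num]
  exact_mod_cast h

end Rat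

namespace Conic

variable {Δ : ℚ}

theorem fst_two_nsmul (P : Conic Δ) : (2 • P).val.1 = P.val.1 ^ 2 - 2 := by
  have hP : P.val.1 ^ 2 - Δ * P.val.2 ^ 2 = 4 := P.property
  rw [two_nsmul, add_val]
  linear_combination -hP / 2

theorem height_two_nsmul (P : Conic Δ) :
    height (2 • P) =
      max |(P.val.1.num : ℝ) ^ 2 - 2 * (P.val.1.den : ℝ) ^ 2| ((P.val.1.den : ℝ) ^ 2) := by
  have hnum : (P.val.1 ^ 2 - 2).num = P.val.1.num ^ 2 - 2 * (P.val.1.den : ℤ) ^ 2 := by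
    have h := Rat.num_sub_intCast (P.val.1 ^ 2) 2
    rw [Rat.num_pow, Rat.den_pow] at h
    exact_mod_cast h
  rw [height, fst_two_nsmul, hnum, Rat.sub_ofNat_den, Rat.den_pow]
  push_cast
  rfl

end Conic

theorem sq_max_abs_le_three_mul_max (a b : ℝ) :
    max |a| |b| ^ 2 ≤ 3 * max |a ^ 2 - 2 * b ^ 2| (b ^ 2) := by
  have hb := le_max_right |a ^ 2 - 2 * b ^ 2| (b ^ 2)
  have hab := (le_abs_self (a ^ 2 - 2 * b ^ 2)).trans (le_max_left _ (b ^ 2))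
  rcases max_cases |a| |b| with ⟨h, _⟩ | ⟨h, _⟩ <;> rw [h, sq_abs] <;> linarith [sq_nonneg b]

theorem max_abs_sq_sub_two_mul_sq_le (a b : ℝ) :
    max |a ^ 2 - 2 * b ^ 2| (b ^ 2) ≤ 2 * max |a| |b| ^ 2 := by
  have ha : a ^ 2 ≤ max |a| |b| ^ 2 := by
    rw [← sq_abs]; exact pow_le_pow_left₀ (abs_nonneg a) (le_max_left _ _) 2
  have hb : b ^ 2 ≤ max |a| |b| ^ 2 := by
    rw [← sq_abs b]; exact pow_le_pow_left₀ (abs_nonneg b) (le_max_right _ _) 2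
  refine max_le (abs_le.2 ⟨?_, ?_⟩) ?_ <;> linarith [sq_nonneg a, sq_nonneg b]

theorem height_double_general (Δ : ℤ) (P : Conic (Δ : ℚ)) :
    (1 / 4 : ℝ) * (Conic.height P) ^ 2 ≤ Conic.height (2 • P) ∧
    Conic.height (2 • P) ≤ 4 * (Conic.height P) ^ 2 := by
  set r : ℝ := (P.val.1.num : ℝ)
  set s : ℝ := (P.val.1.den : ℝ)
  have hH : Conic.height P = max |r| |s| := by
    rw [abs_of_nonneg (show (0 : ℝ) ≤ s by positivity)]; rfl
  have hlower := sq_max_abs_le_three_mul_max r s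
  have hupper := max_abs_sq_sub_two_mul_sq_le r s
  rw [Conic.height_two_nsmul, hH]
  constructor <;> linarith [sq_nonneg (max |r| |s|), sq_nonneg s, le_max_right |r ^ 2 - 2 * s ^ 2| (s ^ 2)]

/-- For every rational point `P` on the Pell conic,
`(1/4)·H(P)² ≤ H(2P) ≤ 4·H(P)²`. -/
theorem height_double (d : ℤ) (hsf : Squarefree d) (hd0 : d ≠ 0) (hd1 : d ≠ 1)
    (Δ : ℤ) (hΔ : Δ = if d % 4 = 1 then d else 4 * d)
    (P : Conic (Δ : ℚ)) :
    (1 / 4 : ℝ) * (Conic.height P) ^ 2 ≤ Conic.height (2 • P) ∧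
    Conic.height (2 • P) ≤ 4 * (Conic.height P) ^ 2 :=
  height_double_general Δ P
end

section
/- Let Q ∈ C(ℚ) be a fixed rational point on the Pell conic and set c = 5·H(Q). Then for all P ∈ C(ℚ) one has (1/c)·H(P) ≤ H(P + Q) ≤ c·H(P). -/
open Filter Real

/-! Write `P = (x, y)`, `Q = (t, u)` with `x = r/s`, `t = a/b` in lowest terms, so that
`x(P + Q) = (xt + Δyu)/2`. On the conic `(Δyu)² = (x² - 4)(t² - 4)`, so `M = sbΔyu` is a
rational number whose square is the integer `(r² - 4s²)(a² - 4b²)`. Hence `M` is an integer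
with `|M| ≤ 4 H(P) H(Q)`, and `x(P + Q) = (ra + M)/(2sb)` has numerator and denominator of
size at most `5 H(P) H(Q)`. The lower bound is the upper bound applied to `P + Q` and `-Q`. -/

namespace Rat

lemma abs_num_le_of_eq_div {q : ℚ} {p n : ℤ} (hn : n ≠ 0) (h : q = p / n) :
    |q.num| ≤ |p| := by
  rcases eq_or_ne p 0 with rfl | hp
  · simp [h]
  · rw [← divInt_eq_div] at h
    subst h
    exact Int.le_of_dvd (abs_pos.mpr hp) ((abs_dvd_abs _ _).mpr (num_dvd p hn))

lemma den_le_of_eq_div {q : ℚ} {p n : ℤ} (hn : n ≠ 0) (h : q = p / n) :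
    (q.den : ℤ) ≤ |n| := by
  rw [← divInt_eq_div] at h
  subst h
  exact Int.le_of_dvd (abs_pos.mpr hn) ((dvd_abs _ _).mpr (den_dvd p n))

lemma exists_intCast_eq_of_sq_eq_intCast {m : ℚ} {k : ℤ} (h : m ^ 2 = k) :
    ∃ M : ℤ, (M : ℚ) = m := by
  have hden : m.den ^ 2 = 1 := by rw [← den_pow, h, den_intCast]
  exact ⟨m.num, (den_eq_one_iff m).mp (by simpa using hden)⟩

lemma den_sq_mul_sq_sub_four (x : ℚ) :
    (x.den : ℚ) ^ 2 * (x ^ 2 - 4) = x.num ^ 2 - 4 * x.den ^ 2 := by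
  linear_combination (x * x.den + x.num) * mul_den_eq_num x

end Rat

namespace Conic

variable {Δ : ℚ}

lemma height_neg (P : Conic Δ) : height (-P) = height P := rfl

lemma abs_num_le_height (P : Conic Δ) : |(P.val.1.num : ℝ)| ≤ height P := le_max_left _ _

lemma den_le_height (P : Conic Δ) : (P.val.1.den : ℝ) ≤ height P := le_max_right _ _

lemma one_le_height (P : Conic Δ) : 1 ≤ height P :=
  le_trans (by exact_mod_cast P.val.1.den_pos) P.den_le_height

lemma height_le_of_eq_div {P : Conic Δ} {p n : ℤ} (hn : n ≠ 0) (h : P.val.1 = p / n) :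
    height P ≤ max |(p : ℝ)| |(n : ℝ)| := by
  have hnum : ((|P.val.1.num| : ℤ) : ℝ) ≤ (|p| : ℤ) := by
    exact_mod_cast Rat.abs_num_le_of_eq_div hn h
  have hden : ((P.val.1.den : ℤ) : ℝ) ≤ (|n| : ℤ) := by
    exact_mod_cast Rat.den_le_of_eq_div hn h
  push_cast at hnum hden
  exact max_le_max hnum hden

lemma abs_num_sq_sub_four_mul_den_sq_le (P : Conic Δ) :
    |(P.val.1.num : ℝ) ^ 2 - 4 * P.val.1.den ^ 2| ≤ 4 * height P ^ 2 := by
  have hnum := sq_le_sq' (abs_le.mp P.abs_num_le_height).1 (abs_le.mp P.abs_num_le_height).2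
  have hden := pow_le_pow_left₀ (Nat.cast_nonneg _) P.den_le_height 2
  exact abs_sub_le_of_nonneg_of_le (sq_nonneg _) (by linarith [sq_nonneg (height P)])
    (by positivity) (by linarith)

lemma sq_cross_term (P Q : Conic Δ) :
    (Δ * P.val.2 * Q.val.2) ^ 2 = (P.val.1 ^ 2 - 4) * (Q.val.1 ^ 2 - 4) := by
  have hP : P.val.1 ^ 2 - Δ * P.val.2 ^ 2 = 4 := P.property
  have hQ : Q.val.1 ^ 2 - Δ * Q.val.2 ^ 2 = 4 := Q.property
  linear_combination (-(Δ * Q.val.2 ^ 2)) * hP - (P.val.1 ^ 2 - 4) * hQ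

def scaledCrossTerm (P Q : Conic Δ) : ℚ := P.val.1.den * Q.val.1.den * (Δ * P.val.2 * Q.val.2)

lemma scaledCrossTerm_sq (P Q : Conic Δ) :
    scaledCrossTerm P Q ^ 2 = (((P.val.1.num ^ 2 - 4 * P.val.1.den ^ 2) *
      (Q.val.1.num ^ 2 - 4 * Q.val.1.den ^ 2) : ℤ) : ℚ) := by
  push_cast
  rw [← Rat.den_sq_mul_sq_sub_four, ← Rat.den_sq_mul_sq_sub_four, scaledCrossTerm, mul_pow,
    sq_cross_term]
  ring

lemma exists_intCast_eq_scaledCrossTerm (P Q : Conic Δ) :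
    ∃ M : ℤ, (M : ℚ) = scaledCrossTerm P Q :=
  Rat.exists_intCast_eq_of_sq_eq_intCast (scaledCrossTerm_sq P Q)

lemma abs_scaledCrossTerm_le (P Q : Conic Δ) :
    |(scaledCrossTerm P Q : ℝ)| ≤ 4 * height P * height Q := by
  have hsq : (scaledCrossTerm P Q : ℝ) ^ 2 = ((P.val.1.num : ℝ) ^ 2 - 4 * P.val.1.den ^ 2) *
      ((Q.val.1.num : ℝ) ^ 2 - 4 * Q.val.1.den ^ 2) := by exact_mod_cast scaledCrossTerm_sq P Q
  have hP := P.one_le_height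
  have hQ := Q.one_le_height
  refine abs_le_of_sq_le_sq ?_ (by positivity)
  calc (scaledCrossTerm P Q : ℝ) ^ 2 ≤ |(scaledCrossTerm P Q : ℝ) ^ 2| := le_abs_self _
    _ = |(P.val.1.num : ℝ) ^ 2 - 4 * P.val.1.den ^ 2| *
        |(Q.val.1.num : ℝ) ^ 2 - 4 * Q.val.1.den ^ 2| := by rw [hsq, abs_mul]
    _ ≤ (4 * height P ^ 2) * (4 * height Q ^ 2) :=
        mul_le_mul P.abs_num_sq_sub_four_mul_den_sq_le Q.abs_num_sq_sub_four_mul_den_sq_le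
          (abs_nonneg _) (by positivity)
    _ = (4 * height P * height Q) ^ 2 := by ring

lemma val_fst_add_eq_div {P Q : Conic Δ} {M : ℤ} (hM : (M : ℚ) = scaledCrossTerm P Q) :
    (P + Q).val.1 = ((P.val.1.num * Q.val.1.num + M : ℤ) : ℚ) /
      ((2 * P.val.1.den * Q.val.1.den : ℤ) : ℚ) := by
  have hP := Rat.mul_den_eq_num P.val.1
  have hQ := Rat.mul_den_eq_num Q.val.1
  rw [scaledCrossTerm] at hM
  rw [add_val, div_eq_div_iff two_ne_zero (by positivity)]
  push_cast
  linear_combination (2 * Q.val.1.den * Q.val.1) * hP + 2 * P.val.1.num * hQ - 2 * hM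

lemma height_add_le (P Q : Conic Δ) : height (P + Q) ≤ 5 * height Q * height P := by
  obtain ⟨M, hM⟩ := exists_intCast_eq_scaledCrossTerm P Q
  have hM_le : |(M : ℝ)| ≤ 4 * height P * height Q := by
    simpa [← hM] using abs_scaledCrossTerm_le P Q
  have hP := P.one_le_height
  have hQ := Q.one_le_height
  refine (height_le_of_eq_div (by positivity) (val_fst_add_eq_div hM)).trans (max_le ?_ ?_)
  · push_cast
    calc |(P.val.1.num : ℝ) * Q.val.1.num + M|
        ≤ |(P.val.1.num : ℝ)| * |(Q.val.1.num : ℝ)| + |(M : ℝ)| := by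
          rw [← abs_mul]; exact abs_add_le _ _
      _ ≤ height P * height Q + 4 * height P * height Q :=
          add_le_add (mul_le_mul P.abs_num_le_height Q.abs_num_le_height (abs_nonneg _)
            (by positivity)) hM_le
      _ = 5 * height Q * height P := by ring
  · push_cast
    rw [abs_of_pos (by positivity)]
    have := mul_le_mul P.den_le_height Q.den_le_height (Nat.cast_nonneg _) (by positivity)
    nlinarith

end Conic

theorem height_translate_general (Δ : ℤ) (Q : Conic (Δ : ℚ)) (c : ℝ) (hc : c = 5 * Conic.height Q) :
    ∀ P : Conic (Δ : ℚ),
      (1 / c) * Conic.height P ≤ Conic.height (P + Q) ∧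
      Conic.height (P + Q) ≤ c * Conic.height P := by
  intro P
  subst hc
  have hc_pos : 0 < 5 * Conic.height Q := by linarith [Q.one_le_height]
  refine ⟨?_, Conic.height_add_le P Q⟩
  have h_back := Conic.height_add_le (P + Q) (-Q)
  rw [add_neg_cancel_right, Conic.height_neg] at h_back
  rw [one_div_mul_eq_div, div_le_iff₀ hc_pos]
  linarith

/-- For a fixed rational point `Q` on the Pell conic and `c = 5·H(Q)`,
every rational point `P` satisfies `(1/c)·H(P) ≤ H(P + Q) ≤ c·H(P)`. -/
theorem height_translate (d : ℤ) (hsf : Squarefree d) (hd0 : d ≠ 0) (hd1 : d ≠ 1)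
    (Δ : ℤ) (hΔ : Δ = if d % 4 = 1 then d else 4 * d)
    (Q : Conic (Δ : ℚ)) (c : ℝ) (hc : c = 5 * Conic.height Q) :
    ∀ P : Conic (Δ : ℚ),
      (1 / c) * Conic.height P ≤ Conic.height (P + Q) ∧
      Conic.height (P + Q) ≤ c * Conic.height P :=
  height_translate_general Δ Q c hc
end

section
/- Suppose Δ > 0. Let P = (x,y) ∈ C(ℚ) be a rational point on the Pell conic, and write x = r/n and y = s/n with integers r, s, n, n > 0, gcd(r,n) = gcd(s,n) = 1. Then the canonical height of P is h(P) = log((|r| + |s|·√Δ)/2). -/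
open Filter Real

lemma den_sq_sub_two (q : ℚ) : ((q^2 - 2 : ℚ)).den = q.den ^ 2 := by
  have hdq : ((q.den : ℚ)) ≠ 0 := by exact_mod_cast q.den_nz
  have hnum : (q.num : ℚ) = q * (q.den : ℚ) := by
    exact (div_eq_iff hdq).mp (Rat.num_div_den q)
  have hb : (0:ℤ) < (q.den : ℤ) ^ 2 := by positivity
  have hq : (q^2 - 2 : ℚ) = ((q.num^2 - 2 * (q.den:ℤ)^2 : ℤ) : ℚ) / (((q.den:ℤ)^2 : ℤ) : ℚ) := by
    rw [eq_div_iff (by push_cast; positivity)]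
    push_cast
    linear_combination (-((q.num:ℚ) + q * (q.den:ℚ))) * hnum
  have hco : Nat.Coprime (q.num^2 - 2*(q.den:ℤ)^2).natAbs ((q.den:ℤ)^2).natAbs := by
    have h1 : IsCoprime q.num (q.den : ℤ) := by
      rw [Int.isCoprime_iff_gcd_eq_one]; exact q.reduced
    have h2 : IsCoprime (q.num^2 - 2*(q.den:ℤ)^2) ((q.den:ℤ)^2) := by
      have h3 := (h1.pow (n := 2) (m := 2)).add_mul_left_left (-2)
      rw [show q.num^2 - 2*(q.den:ℤ)^2 = q.num^2 + (q.den:ℤ)^2 * (-2) by ring]; exact h3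
    rw [Int.isCoprime_iff_gcd_eq_one] at h2
    exact h2
  have hd := Rat.den_div_eq_of_coprime hb hco
  rw [hq]
  have h4 : ((q.den:ℤ)^2).natAbs = q.den ^ 2 := by simp [Int.natAbs_pow]
  omega

lemma conic_double_x {Δ : ℚ} (Q : Conic Δ) :
    (((2:ℕ) • Q)).val.1 = Q.val.1 ^ 2 - 2 := by
  have hQ := Q.property
  unfold PellSol at hQ
  rw [two_nsmul, Conic.add_val]
  dsimp only
  linear_combination -hQ / 2

lemma abs_add_inv_self (t : ℝ) (ht : t ≠ 0) : |t + t⁻¹| = |t| + |t|⁻¹ := by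
  rw [← abs_inv]
  rcases lt_or_gt_of_ne ht with h | h
  · have hi : t⁻¹ < 0 := inv_lt_zero.mpr h
    rw [abs_of_neg h, abs_of_neg hi, abs_of_neg (by linarith)]
    ring
  · have hi : 0 < t⁻¹ := inv_pos.mpr h
    rw [abs_of_pos h, abs_of_pos hi, abs_of_pos (by linarith)]

lemma max_abs_add_sub (a b : ℝ) : max |a + b| |a - b| = |a| + |b| := by
  apply le_antisymm
  · exact max_le (abs_add_le a b) (abs_sub a b)
  rcases le_total 0 a with ha | ha <;> rcases le_total 0 b with hb | hb
  · calc |a| + |b| = |a + b| := by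
          rw [abs_of_nonneg ha, abs_of_nonneg hb, abs_of_nonneg (by linarith)]
      _ ≤ _ := le_max_left _ _
  · calc |a| + |b| = |a - b| := by
          rw [abs_of_nonneg ha, abs_of_nonpos hb, abs_of_nonneg (by linarith)]; ring
      _ ≤ _ := le_max_right _ _
  · calc |a| + |b| = |a - b| := by
          rw [abs_of_nonpos ha, abs_of_nonneg hb, abs_of_nonpos (by linarith)]; ring
      _ ≤ _ := le_max_right _ _
  · calc |a| + |b| = |a + b| := by
          rw [abs_of_nonpos ha, abs_of_nonpos hb, abs_of_nonpos (by linarith)]; ring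
      _ ≤ _ := le_max_left _ _

/-- For `Δ > 0`, the canonical height of a rational point
`P = (r/n, s/n)` (in lowest terms, `n > 0`) on the Pell conic is
`h(P) = log((|r| + |s|·√Δ)/2)`. -/
theorem canHeight_formula_pos (d : ℤ) (hsf : Squarefree d) (hd0 : d ≠ 0) (hd1 : d ≠ 1)
    (Δ : ℤ) (hΔ : Δ = if d % 4 = 1 then d else 4 * d) (hΔpos : 0 < Δ)
    (P : Conic (Δ : ℚ)) (r s n : ℤ) (hn : 0 < n)
    (hgr : Int.gcd r n = 1) (hgs : Int.gcd s n = 1)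
    (hx : P.val.1 = (r : ℚ) / (n : ℚ)) (hy : P.val.2 = (s : ℚ) / (n : ℚ)) :
    Conic.canHeight P =
      Real.log ((((|r| : ℤ) : ℝ) + ((|s| : ℤ) : ℝ) * Real.sqrt ((Δ : ℤ) : ℝ)) / 2) := by
  have hnQ : ((n : ℚ)) ≠ 0 := Int.cast_ne_zero.mpr hn.ne'
  have hnR : ((n : ℝ)) ≠ 0 := Int.cast_ne_zero.mpr hn.ne'
  have hnRpos : (0:ℝ) < (n : ℝ) := by exact_mod_cast hn
  -- the Pell equation for (r, s, n)
  have hPell : (r:ℚ)^2 - (Δ:ℚ) * (s:ℚ)^2 = 4 * (n:ℚ)^2 := by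
    have hP := P.property
    unfold PellSol at hP
    rw [hx, hy] at hP
    field_simp at hP
    linear_combination hP
  have hPellZ : r^2 - Δ * s^2 = 4 * n^2 := by exact_mod_cast hPell
  have hPR : (r:ℝ)^2 - ((Δ:ℤ):ℝ) * (s:ℝ)^2 = 4 * (n:ℝ)^2 := by exact_mod_cast hPellZ
  set R : ℝ := Real.sqrt ((Δ:ℤ) : ℝ) with hRdef
  have hΔR : (0:ℝ) < ((Δ:ℤ):ℝ) := by exact_mod_cast hΔpos
  have hR2 : R ^ 2 = ((Δ:ℤ):ℝ) := Real.sq_sqrt hΔR.le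
  have hRpos : 0 < R := Real.sqrt_pos.mpr hΔR
  set e : ℝ := ((r:ℝ) + (s:ℝ) * R) / (2 * (n:ℝ)) with hedef
  set f : ℝ := ((r:ℝ) - (s:ℝ) * R) / (2 * (n:ℝ)) with hfdef
  have hef : e * f = 1 := by
    rw [hedef, hfdef, div_mul_div_comm, div_eq_one_iff_eq (by positivity)]
    linear_combination hPR - (s:ℝ)^2 * hR2
  have he0 : e ≠ 0 := left_ne_zero_of_mul_eq_one hef
  have hfe : f = e⁻¹ := eq_inv_of_mul_eq_one_right hef
  have hx_real : ((P.val.1 : ℚ) : ℝ) = e + e⁻¹ := by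
    rw [← hfe, hx, hedef, hfdef]
    push_cast
    field_simp
    ring
  have hden0 : (P.val.1).den = n.toNat := by
    have hco : Nat.Coprime r.natAbs n.natAbs := hgr
    have := Rat.den_div_eq_of_coprime hn hco
    rw [hx]
    omega
  have hsmul_step : ∀ k : ℕ, ((2 ^ (k+1))) • P = (2:ℕ) • ((2 ^ k) • P) := by
    intro k
    rw [pow_succ, mul_comm, mul_smul]
  have key : ∀ k : ℕ, ((((2 ^ k) • P).val.1 : ℚ) : ℝ) = e ^ (2^k) + (e ^ (2^k))⁻¹ ∧
      (((2 ^ k) • P).val.1).den = n.toNat ^ (2^k) := by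
    intro k
    induction k with
    | zero =>
      rw [pow_zero, one_smul]
      exact ⟨by simpa using hx_real, by simpa using hden0⟩
    | succ k ih =>
      rw [hsmul_step k, conic_double_x]
      have hek : e ^ (2^k) ≠ 0 := pow_ne_zero _ he0
      constructor
      · push_cast
        rw [ih.1, pow_succ (2:ℕ) k, pow_mul]
        field_simp
        ring
      · rw [den_sq_sub_two, ih.2, pow_succ (2:ℕ) k, pow_mul]
  set u : ℝ := |e| with hudef
  have hu0 : 0 < u := abs_pos.mpr he0
  set ε : ℝ := max u u⁻¹ with hεdef
  have hε1 : 1 ≤ ε := by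
    rcases le_total 1 u with h | h
    · exact le_max_of_le_left h
    · exact le_max_of_le_right ((one_le_inv₀ hu0).mpr h)
  have hεpos : 0 < ε := lt_of_lt_of_le one_pos hε1
  have hsum : ∀ m : ℕ, u ^ m + (u ^ m)⁻¹ = ε ^ m + (ε ^ m)⁻¹ := by
    intro m
    rcases le_total u⁻¹ u with h | h
    · rw [hεdef, max_eq_left h]
    · rw [hεdef, max_eq_right h, inv_pow, inv_inv, add_comm]
  have habsx : ∀ k : ℕ, |((((2 ^ k) • P).val.1 : ℚ) : ℝ)| = ε ^ (2^k) + (ε ^ (2^k))⁻¹ := by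
    intro k
    rw [(key k).1, abs_add_inv_self _ (pow_ne_zero _ he0), abs_pow, ← hudef, hsum]
  set L : ℝ := Real.log ((n:ℝ) * ε) with hLdef
  have hlogn : Real.log ((n:ℝ)) + Real.log ε = L := by
    rw [hLdef, Real.log_mul hnR hεpos.ne']
  have hlogH : ∀ k : ℕ, Conic.logHeight ((2 ^ k) • P)
      = (2:ℝ)^k * Real.log (n:ℝ) + Real.log (ε ^ (2^k) + (ε ^ (2^k))⁻¹) := by
    intro k
    set q : ℚ := ((2 ^ k) • P).val.1 with hqdef
    have hεm : 1 ≤ ε ^ (2^k) := one_le_pow₀ hε1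
    have hεminv : 0 < (ε ^ (2^k))⁻¹ := by positivity
    have habs : |((q:ℚ):ℝ)| = ε ^ (2^k) + (ε ^ (2^k))⁻¹ := habsx k
    have hq1 : 1 < |((q:ℚ):ℝ)| := by rw [habs]; linarith
    have hdenpos : (0:ℝ) < (q.den : ℝ) := by exact_mod_cast q.pos
    have hnumabs : |((q.num:ℤ):ℝ)| = (q.den : ℝ) * |((q:ℚ):ℝ)| := by
      have h2 : (q.num : ℚ) = q * (q.den : ℚ) :=
        (div_eq_iff (by exact_mod_cast q.den_nz)).mp (Rat.num_div_den q)
      have h3 : ((q.num:ℤ):ℝ) = ((q:ℚ):ℝ) * (q.den:ℝ) := by exact_mod_cast h2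
      rw [h3, abs_mul, abs_of_pos hdenpos]
      ring
    have hmax : Conic.height ((2 ^ k) • P) = (q.den : ℝ) * |((q:ℚ):ℝ)| := by
      rw [Conic.height, hnumabs, max_eq_left (by nlinarith)]
    rw [Conic.logHeight, hmax, Real.log_mul hdenpos.ne' (by positivity), habs, (key k).2]
    congr 1
    have hnt : ((n.toNat : ℕ) : ℝ) = (n:ℝ) := by exact_mod_cast Int.toNat_of_nonneg hn.le
    rw [show ((n.toNat ^ 2^k : ℕ) : ℝ) = ((n:ℝ)) ^ (2^k : ℕ) by push_cast [hnt]; ring]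
    rw [Real.log_pow]
    push_cast
    ring
  have hT : Filter.Tendsto (fun k : ℕ => Conic.logHeight ((2 ^ k) • P) / 2 ^ k)
      Filter.atTop (nhds L) := by
    have hupperlim : Filter.Tendsto (fun k : ℕ => L + Real.log 2 * (2⁻¹ : ℝ) ^ k)
        Filter.atTop (nhds L) := by
      have h1 : Filter.Tendsto (fun k : ℕ => ((2:ℝ)⁻¹) ^ k) Filter.atTop (nhds 0) :=
        tendsto_pow_atTop_nhds_zero_of_lt_one (by norm_num) (by norm_num)
      have := Filter.Tendsto.const_add L ((h1.const_mul (Real.log 2)))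
      simpa using this
    apply tendsto_of_tendsto_of_tendsto_of_le_of_le tendsto_const_nhds hupperlim
    · intro k
      show L ≤ Conic.logHeight ((2 ^ k) • P) / 2 ^ k
      have h2k : (0:ℝ) < (2:ℝ) ^ k := by positivity
      have hεm : 1 ≤ ε ^ (2^k) := one_le_pow₀ hε1
      have hεminv0 : 0 < (ε ^ (2^k))⁻¹ := by positivity
      have hlow : (2:ℝ)^k * Real.log ε ≤ Real.log (ε ^ (2^k) + (ε ^ (2^k))⁻¹) := by
        have : Real.log (ε ^ (2^k)) ≤ Real.log (ε ^ (2^k) + (ε ^ (2^k))⁻¹) :=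
          Real.log_le_log (by positivity) (by linarith)
        rw [Real.log_pow] at this
        push_cast at this
        linarith
      rw [hlogH k, ← hlogn, div_eq_mul_inv, add_mul]
      have h1 : ((2:ℝ)^k * Real.log (n:ℝ)) * ((2:ℝ)^k)⁻¹ = Real.log (n:ℝ) := by
        field_simp
      rw [h1]
      have h2 : Real.log ε ≤ Real.log (ε ^ (2^k) + (ε ^ (2^k))⁻¹) * ((2:ℝ)^k)⁻¹ := by
        rw [le_mul_inv_iff₀ h2k, mul_comm]
        exact hlow
      linarith
    · intro k
      show Conic.logHeight ((2 ^ k) • P) / 2 ^ k ≤ L + Real.log 2 * (2⁻¹ : ℝ) ^ k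
      have h2k : (0:ℝ) < (2:ℝ) ^ k := by positivity
      have hεm : 1 ≤ ε ^ (2^k) := one_le_pow₀ hε1
      have hεminv0 : 0 < (ε ^ (2^k))⁻¹ := by positivity
      have hεminv1 : (ε ^ (2^k))⁻¹ ≤ 1 := inv_le_one_of_one_le₀ hεm
      have hhigh : Real.log (ε ^ (2^k) + (ε ^ (2^k))⁻¹)
          ≤ (2:ℝ)^k * Real.log ε + Real.log 2 := by
        have : Real.log (ε ^ (2^k) + (ε ^ (2^k))⁻¹) ≤ Real.log (2 * ε ^ (2^k)) :=
          Real.log_le_log (by positivity) (by linarith)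
        rw [Real.log_mul (by norm_num) (by positivity), Real.log_pow] at this
        push_cast at this
        linarith
      rw [hlogH k, ← hlogn, div_eq_mul_inv, add_mul]
      have h1 : ((2:ℝ)^k * Real.log (n:ℝ)) * ((2:ℝ)^k)⁻¹ = Real.log (n:ℝ) := by
        field_simp
      rw [h1]
      have hpow : (2⁻¹:ℝ)^k = ((2:ℝ)^k)⁻¹ := by rw [inv_pow]
      have h2 : Real.log (ε ^ (2^k) + (ε ^ (2^k))⁻¹) * ((2:ℝ)^k)⁻¹
          ≤ Real.log ε + Real.log 2 * ((2:ℝ)^k)⁻¹ := by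
        rw [mul_inv_le_iff₀ h2k]
        have : (Real.log ε + Real.log 2 * ((2:ℝ)^k)⁻¹) * (2:ℝ)^k
            = (2:ℝ)^k * Real.log ε + Real.log 2 := by field_simp
        rw [this]
        exact hhigh
      rw [hpow]
      linarith
  have hcan : Conic.canHeight P = L := by
    unfold Conic.canHeight
    exact hT.limUnder_eq
  rw [hcan, hLdef]
  congr 1
  have h2n : (0:ℝ) < 2 * (n:ℝ) := by linarith
  have hu : u = |(r:ℝ) + (s:ℝ) * R| / (2 * (n:ℝ)) := by
    rw [hudef, hedef, abs_div, abs_of_pos h2n]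
  have huinv : u⁻¹ = |(r:ℝ) - (s:ℝ) * R| / (2 * (n:ℝ)) := by
    rw [← abs_inv, ← hfe, hfdef, abs_div, abs_of_pos h2n]
  rw [hεdef, huinv, hu, max_div_div_right h2n.le,
    max_abs_add_sub, abs_mul, abs_of_pos hRpos]
  rw [Int.cast_abs, Int.cast_abs]
  field_simp
end

section
/- Suppose Δ < 0. Let P = (x,y) ∈ C(ℚ) be a rational point on the Pell conic, and write x = r/n and y = s/n with integers r, s, n, n > 0, gcd(r,n) = gcd(s,n) = 1. Then the canonical height of P is h(P) = log n. -/
open Filter Real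

/-! For `Δ < 0` the conic is bounded (`|x| ≤ 2`), so the naive height of a point is its
denominator up to a factor `2`. Doubling sends `x` to `x² - 2`, which squares the denominator;
hence `h₀(2ᵏP) = 2ᵏ log n + O(1)` and `h(P) = log n`. -/

lemma Rat.abs_num_le_of_abs_le {q : ℚ} {c : ℚ} (h : |q| ≤ c) : (|q.num| : ℚ) ≤ c * q.den := by
  rw [← Rat.mul_den_eq_num, abs_mul, Nat.abs_cast]
  gcongr

lemma tendsto_div_two_pow_of_abs_sub_le {f : ℕ → ℝ} {c C : ℝ}
    (hf : ∀ k, |f k - 2 ^ k * c| ≤ C) : Tendsto (fun k => f k / 2 ^ k) atTop (nhds c) := by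
  have hC : Tendsto (fun k : ℕ => C * (1 / 2 : ℝ) ^ k) atTop (nhds 0) := by
    simpa only [mul_zero] using
      (tendsto_pow_atTop_nhds_zero_of_lt_one (by norm_num) (by norm_num)).const_mul C
  rw [tendsto_iff_norm_sub_tendsto_zero]
  refine squeeze_zero (fun _ => norm_nonneg _) (fun k => ?_) hC
  have h2k : (0 : ℝ) < 2 ^ k := by positivity
  calc ‖f k / 2 ^ k - c‖ = |f k - 2 ^ k * c| / 2 ^ k := by
        rw [Real.norm_eq_abs, div_sub' h2k.ne', abs_div, abs_of_pos h2k]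
    _ ≤ C / 2 ^ k := by gcongr; exact hf k
    _ = C * (1 / 2) ^ k := by rw [one_div_pow, div_eq_mul_one_div]

namespace Conic

variable {δ : ℚ}

lemma double_fst (P : Conic δ) : (P + P).val.1 = P.val.1 ^ 2 - 2 := by
  have hP : P.val.1 ^ 2 - δ * P.val.2 ^ 2 = 4 := P.property
  rw [add_val]
  linear_combination -hP / 2

lemma two_pow_nsmul_fst_den (P : Conic δ) (k : ℕ) :
    ((2 ^ k) • P).val.1.den = P.val.1.den ^ 2 ^ k := by
  induction k with
  | zero => simp
  | succ k ih =>
    rw [pow_succ, mul_two, add_nsmul, double_fst, Rat.sub_ofNat_den, Rat.den_pow, ih, ← pow_mul,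
      mul_two]

lemma abs_fst_le_two (hδ : δ ≤ 0) (P : Conic δ) : |P.val.1| ≤ 2 := by
  have hP : P.val.1 ^ 2 - δ * P.val.2 ^ 2 = 4 := P.property
  have hsq : P.val.1 ^ 2 ≤ 2 ^ 2 := by nlinarith [sq_nonneg P.val.2]
  exact abs_le_of_sq_le_sq hsq (by norm_num)

lemma abs_logHeight_sub_log_den_le (hδ : δ ≤ 0) (P : Conic δ) :
    |logHeight P - Real.log P.val.1.den| ≤ Real.log 2 := by
  have hden : (0 : ℝ) < P.val.1.den := by exact_mod_cast P.val.1.pos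
  have hlow : (P.val.1.den : ℝ) ≤ height P := le_max_right _ _
  have hupp : height P ≤ 2 * P.val.1.den := by
    refine max_le ?_ (by linarith)
    exact_mod_cast Rat.abs_num_le_of_abs_le (abs_fst_le_two hδ P)
  have hlog_upp : logHeight P ≤ Real.log 2 + Real.log P.val.1.den := by
    rw [← Real.log_mul two_ne_zero hden.ne']
    exact Real.log_le_log (hden.trans_le hlow) hupp
  have hlog_low : Real.log P.val.1.den ≤ logHeight P := Real.log_le_log hden hlow
  rw [abs_of_nonneg (sub_nonneg.mpr hlog_low)]
  linarith

lemma canHeight_eq_log_den (hδ : δ ≤ 0) (P : Conic δ) :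
    canHeight P = Real.log P.val.1.den := by
  refine (tendsto_div_two_pow_of_abs_sub_le (C := Real.log 2) fun k => ?_).limUnder_eq
  have h := abs_logHeight_sub_log_den_le hδ ((2 ^ k) • P)
  rwa [two_pow_nsmul_fst_den, Nat.cast_pow, Real.log_pow, Nat.cast_pow, Nat.cast_ofNat] at h

end Conic

theorem canHeight_formula_neg_general
    (Δ : ℤ) (hΔneg : Δ < 0)
    (P : Conic (Δ : ℚ)) (r n : ℤ) (hn : 0 < n)
    (hgr : Int.gcd r n = 1)
    (hx : P.val.1 = (r : ℚ) / (n : ℚ)) :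
    Conic.canHeight P = Real.log ((n : ℤ) : ℝ) := by
  have hden : (P.val.1.den : ℤ) = n := by
    rw [hx]
    exact Rat.den_div_eq_of_coprime hn hgr
  rw [Conic.canHeight_eq_log_den (by exact_mod_cast hΔneg.le), ← hden, Int.cast_natCast]

/-- For `Δ < 0`, the canonical height of a rational point
`P = (r/n, s/n)` (in lowest terms, `n > 0`) on the Pell conic is `h(P) = log n`. -/
theorem canHeight_formula_neg (d : ℤ) (hsf : Squarefree d) (hd0 : d ≠ 0) (hd1 : d ≠ 1)
    (Δ : ℤ) (hΔ : Δ = if d % 4 = 1 then d else 4 * d) (hΔneg : Δ < 0)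
    (P : Conic (Δ : ℚ)) (r s n : ℤ) (hn : 0 < n)
    (hgr : Int.gcd r n = 1) (hgs : Int.gcd s n = 1)
    (hx : P.val.1 = (r : ℚ) / (n : ℚ)) (hy : P.val.2 = (s : ℚ) / (n : ℚ)) :
    Conic.canHeight P = Real.log ((n : ℤ) : ℝ) :=
  canHeight_formula_neg_general Δ hΔneg P r n hn hgr hx
end

section
/- Let G be an abelian group such that the quotient G/2G is finite, and suppose there exists a function h : G → ℝ≥0 with the following properties: (1) for every c > 0, the set {g ∈ G : h(g) < c} is finite; (2) h(2g) = 2·h(g) for all g ∈ G; (3) h(g − g')² + h(g + g')² = 2·h(g)² + 2·h(g')² for all g, g' ∈ G. Then G is finitely generated. -/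
/-!
Fix representatives `S` of `G / 2G` and write any `g` as `2x + s` with `s ∈ S`. The parallelogram
law gives `4 h(x)² = h(g - s)² ≤ 2 h(g)² + 2 h(s)²`, so `h(x)²` is at most the mean of `h(g)²`
and an upper bound `c` of `h²` on `S`. Descending, every `g` lies in the subgroup generated by the
finite set `S` and the finite set of elements with `h² ≤ c + 1`.
-/

theorem QuotientAddGroup.exists_eq_add_out {G H : Type*} [AddCommGroup G] [AddGroup H]
    (f : H →+ G) (g : G) : ∃ x, g = f x + (g : G ⧸ f.range).out := by
  obtain ⟨⟨_, x, rfl⟩, hx⟩ := QuotientAddGroup.mk_out_eq_add f.range g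
  exact ⟨-x, by rw [hx, map_neg]; abel⟩

theorem AddSubgroup.closure_union_setOf_le_eq_top_of_descent {G : Type*} [AddCommGroup G]
    (H : G → ℝ) (S : Set G) (c : ℝ)
    (hdesc : ∀ g, ∃ x, ∃ s ∈ S, g = 2 • x + s ∧ H x ≤ (H g + c) / 2) :
    closure (S ∪ {g | H g ≤ c + 1}) = ⊤ := by
  set K := closure (S ∪ {g | H g ≤ c + 1})
  suffices ∀ n : ℕ, ∀ g, H g ≤ c + 1 + n → g ∈ K from
    eq_top_iff.mpr fun g _ => this ⌈H g - c - 1⌉₊ g (by linarith [Nat.le_ceil (H g - c - 1)])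
  intro n
  induction n with
  | zero => exact fun g hg => subset_closure (Or.inr (by simpa using hg))
  | succ n ih =>
    intro g hg
    obtain ⟨x, s, hs, rfl, hx⟩ := hdesc g
    have hxK : x ∈ K := ih x (by push_cast at hg; linarith)
    exact add_mem (nsmul_mem hxK 2) (subset_closure (Or.inl hs))

theorem sq_le_of_eq_two_nsmul_add {G : Type*} [AddCommGroup G] {h : G → ℝ}
    (hdbl : ∀ g : G, h (2 • g) = 2 * h g)
    (hpar : ∀ g g' : G, h (g - g') ^ 2 + h (g + g') ^ 2 = 2 * h g ^ 2 + 2 * h g' ^ 2)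
    {g x s : G} (hg : g = 2 • x + s) : h x ^ 2 ≤ (h g ^ 2 + h s ^ 2) / 2 := by
  have hsub : h (g - s) = 2 * h x := by rw [hg, add_sub_cancel_right, hdbl]
  have := hpar g s
  rw [hsub] at this
  nlinarith [sq_nonneg (h (g + s))]

theorem Set.finite_setOf_sq_le {α : Type*} {f : α → ℝ}
    (hfin : ∀ c : ℝ, 0 < c → {a | f a < c}.Finite) (b : ℝ) : {a | f a ^ 2 ≤ b}.Finite := by
  refine (hfin (max b 0 + 1) (by positivity)).subset
    fun a (ha : f a ^ 2 ≤ b) => show f a < _ from ?_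
  by_contra! hlt
  nlinarith [le_max_left b 0, le_max_right b 0]

theorem abstract_descent_general (G : Type*) [AddCommGroup G]
    (hquot : Finite (G ⧸ (AddMonoidHom.range
      (AddMonoidHom.mk' (fun g : G => 2 • g) (fun a b => smul_add 2 a b)))))
    (h : G → ℝ)
    (hfin : ∀ c : ℝ, 0 < c → {g : G | h g < c}.Finite)
    (hdbl : ∀ g : G, h (2 • g) = 2 * h g)
    (hpar : ∀ g g' : G, h (g - g') ^ 2 + h (g + g') ^ 2 = 2 * h g ^ 2 + 2 * h g' ^ 2) :
    AddGroup.FG G := by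
  set two := AddMonoidHom.mk' (fun g : G => 2 • g) (fun a b => smul_add 2 a b)
  set S := Set.range (Quotient.out : G ⧸ two.range → G)
  have hS : S.Finite := Set.finite_range _
  obtain ⟨c, hc⟩ := (hS.image fun s => h s ^ 2).bddAbove
  have hdesc : ∀ g, ∃ x, ∃ s ∈ S, g = 2 • x + s ∧ h x ^ 2 ≤ (h g ^ 2 + c) / 2 := by
    intro g
    obtain ⟨x, hx⟩ := QuotientAddGroup.exists_eq_add_out two g
    have hsc : h (g : G ⧸ two.range).out ^ 2 ≤ c := hc ⟨_, ⟨_, rfl⟩, rfl⟩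
    have hxg := sq_le_of_eq_two_nsmul_add hdbl hpar hx
    exact ⟨x, _, ⟨_, rfl⟩, hx, by linarith⟩
  exact AddGroup.fg_iff.mpr ⟨_, AddSubgroup.closure_union_setOf_le_eq_top_of_descent _ S c hdesc,
    hS.union (Set.finite_setOf_sq_le hfin _)⟩

/-- An abstract descent theorem: if `G` is an abelian group with
`G/2G` finite, admitting a nonnegative real-valued "height" function `h` such that
sets of bounded height are finite, `h(2g) = 2h(g)`, and `h` satisfies the
parallelogram equality for squares, then `G` is finitely generated. -/
theorem abstract_descent (G : Type*) [AddCommGroup G]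
    (hquot : Finite (G ⧸ (AddMonoidHom.range
      (AddMonoidHom.mk' (fun g : G => 2 • g) (fun a b => smul_add 2 a b)))))
    (h : G → ℝ) (hnonneg : ∀ g, 0 ≤ h g)
    (hfin : ∀ c : ℝ, 0 < c → {g : G | h g < c}.Finite)
    (hdbl : ∀ g : G, h (2 • g) = 2 * h g)
    (hpar : ∀ g g' : G, h (g - g') ^ 2 + h (g + g') ^ 2 = 2 * h g ^ 2 + 2 * h g' ^ 2) :
    AddGroup.FG G :=
  abstract_descent_general G hquot h hfin hdbl hpar
end

section
/- Theorem of Mordell–Weil for Pell conics: the group C(ℤ) of integral points on the Pell conic X² − ΔY² = 4 is finitely generated; hence C(ℤ) ≅ C(ℤ)_tors ⊕ ℤ^r for a finite torsion group C(ℤ)_tors and some integer r ≥ 0. -/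
open Filter Real

section MWAux

open Polynomial

private theorem structThm (G : Type) [AddCommGroup G] [Module.Finite ℤ G] :
    Finite (↥(AddCommGroup.torsion G)) ∧
    ∃ r : ℕ, Nonempty (G ≃+ ((↥(AddCommGroup.torsion G)) × (Fin r → ℤ))) := by
  classical
  haveI : IsNoetherian ℤ G := isNoetherian_of_isNoetherianRing_of_finite ℤ G
  set T := Submodule.torsion ℤ G with hTdef
  have hTeq : T.toAddSubgroup = AddCommGroup.torsion G := Submodule.torsion_int
  let eT : ↥T ≃+ ↥(AddCommGroup.torsion G) :=
    { toFun := fun x => ⟨x.1, hTeq ▸ (show x.1 ∈ T.toAddSubgroup from x.2)⟩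
      invFun := fun x => ⟨x.1, show x.1 ∈ T.toAddSubgroup from hTeq.symm ▸ x.2⟩
      left_inv := fun x => rfl
      right_inv := fun x => rfl
      map_add' := fun x y => rfl }
  haveI : Module.Finite ℤ ↥T := Module.Finite.iff_fg.mpr (IsNoetherian.noetherian T)
  have hfinT : Finite ↥T := Module.finite_of_fg_torsion _ (Submodule.torsion_isTorsion)
  refine ⟨Finite.of_equiv _ eT.toEquiv, ?_⟩
  haveI : Module.Finite ℤ (G ⧸ T) := Module.Finite.of_surjective _ T.mkQ_surjective
  obtain ⟨n, g⟩ := @Module.basisOfFiniteTypeTorsionFree' ℤ _ (G ⧸ T) _ _ _ _ _ _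
  haveI : Module.Projective ℤ (G ⧸ T) := Module.Projective.of_basis g
  obtain ⟨f, hf⟩ := Module.projective_lifting_property T.mkQ LinearMap.id T.mkQ_surjective
  have e1 : (↥T × (G ⧸ T)) ≃ₗ[ℤ] G :=
    lequivProdOfRightSplitExact T.injective_subtype
      (by rw [Submodule.range_subtype, Submodule.ker_mkQ]) hf
  exact ⟨n, ⟨e1.symm.toAddEquiv.trans (AddEquiv.prodCongr eT g.equivFun.toAddEquiv)⟩⟩

private theorem not_square (d : ℤ) (hsf : Squarefree d) (hd1 : d ≠ 1)
    (Δ : ℤ) (hΔ : Δ = d ∨ Δ = 4 * d) : ∀ b : ℚ, b ^ 2 ≠ (Δ : ℚ) := by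
  intro b hb
  have hsq : IsSquare ((Δ : ℤ) : ℚ) := ⟨b, by rw [← hb]; ring⟩
  rw [Rat.isSquare_intCast_iff] at hsq
  have hd : IsSquare d := by
    rcases hΔ with h | h
    · rwa [h] at hsq
    · obtain ⟨k, hk⟩ := hsq
      rw [h] at hk
      have h2 : (2 : ℤ) ∣ k := by
        have : (2 : ℤ) ∣ k * k := ⟨2 * d, by linarith⟩
        rcases (Int.prime_two.dvd_mul.mp this) with h | h <;> exact h
      obtain ⟨m, hm⟩ := h2
      refine ⟨m, ?_⟩
      have : (4 : ℤ) * d = 4 * (m * m) := by rw [hk, hm]; ring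
      linarith [mul_left_cancel₀ (by norm_num : (4:ℤ) ≠ 0) this]
  obtain ⟨m, hm⟩ := hd
  have : IsUnit m := hsf m ⟨1, by rw [hm]; ring⟩
  rcases Int.isUnit_iff.mp this with h | h <;> (rw [h] at hm; omega)

private theorem intPoints_moduleFinite (Δ : ℤ) (hq : ∀ b : ℚ, b ^ 2 ≠ (Δ : ℚ)) :
    Module.Finite ℤ (↥(intPoints Δ)) := by
  classical
  have hirr : Irreducible (X ^ 2 - C ((Δ : ℚ))) :=
    X_pow_sub_C_irreducible_of_prime Nat.prime_two hq
  haveI : Fact (Irreducible (X ^ 2 - C ((Δ : ℚ)))) := ⟨hirr⟩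
  set K := AdjoinRoot (X ^ 2 - C ((Δ : ℚ))) with hK
  haveI : CharZero K := charZero_of_injective_algebraMap (algebraMap ℚ K).injective
  haveI : FiniteDimensional ℚ K :=
    (AdjoinRoot.powerBasis hirr.ne_zero).finite
  haveI : NumberField K := ⟨⟩
  set A : ℚ →+* K := algebraMap ℚ K with hA
  have hAinj : Function.Injective A := A.injective
  set rt : K := AdjoinRoot.root (X ^ 2 - C ((Δ : ℚ))) with hrt
  have hr : rt ^ 2 = A (Δ : ℚ) := by
    have h0 := AdjoinRoot.eval₂_root (X ^ 2 - C ((Δ : ℚ)))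
    rw [eval₂_sub, eval₂_pow, eval₂_X, eval₂_C, sub_eq_zero] at h0
    exact h0.trans rfl
  set fK : ℚ × ℚ → K := fun v => A (v.1 / 2) + A (v.2 / 2) * rt with hfK
  have hmul : ∀ P Q : Conic ((Δ : ℚ)), fK (P + Q).val = fK P.val * fK Q.val := by
    intro P Q
    rw [Conic.add_val]
    simp only [hfK, map_div₀, map_add, map_mul, map_ofNat]
    linear_combination (-(A P.val.2 * A Q.val.2) / 4) * hr
  have hinvmul : ∀ P : Conic ((Δ : ℚ)), fK P.val * fK (-P).val = 1 := by
    intro P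
    have hP := P.property
    unfold PellSol at hP
    have hPA := congrArg A hP
    rw [Conic.neg_val]
    simp only [map_sub, map_mul, map_pow, map_ofNat] at hPA
    simp only [hfK, map_div₀, map_neg, map_ofNat]
    linear_combination hPA / 4 - (A P.val.2 ^ 2 / 4) * hr
  have hinj0 : ∀ x y : ℚ, A x + A y * rt = 0 → x = 0 ∧ y = 0 := by
    intro x y h
    by_cases hy : y = 0
    · subst hy
      rw [map_zero, zero_mul, add_zero] at h
      exact ⟨hAinj (by rw [h, map_zero]), rfl⟩
    · exfalso
      have hy' : A y ≠ 0 := fun hc => hy (hAinj (by rw [hc, map_zero]))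
      have hrtv : rt = A (-x / y) := by
        rw [map_div₀, map_neg, eq_div_iff hy']
        linear_combination h
      apply hq (-x / y)
      apply hAinj
      rw [map_pow, ← hrtv, hr]
  have hint : ∀ P : Conic ((Δ : ℚ)), (∃ a b : ℤ, P.val = ((a : ℚ), (b : ℚ))) →
      IsIntegral ℤ (fK P.val) := by
    rintro P ⟨a, b, hab⟩
    have hP := P.property
    unfold PellSol at hP
    rw [hab] at hP
    dsimp only at hP
    refine ⟨X ^ 2 - C a * X + C 1, ?_, ?_⟩
    · monicity!
    · have hPA := congrArg A hP
      simp only [map_sub, map_mul, map_pow, map_ofNat] at hPA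
      have hZA : ∀ n : ℤ, algebraMap ℤ K n = A ((n : ℚ)) := by
        intro n
        simp
      simp only [eval₂_add, eval₂_sub, eval₂_mul, eval₂_pow, eval₂_X, eval₂_C]
      simp only [hZA, Int.cast_one]
      simp only [hfK, hab, map_div₀, map_one, map_ofNat]
      linear_combination (A ((b:ℚ)) ^ 2 / 4) * hr - hPA / 4
  let U : ↥(intPoints Δ) → (NumberField.RingOfIntegers K)ˣ := fun P =>
    { val := ⟨fK (P : Conic ((Δ : ℚ))).val, hint _ P.2⟩
      inv := ⟨fK (-(P : Conic ((Δ : ℚ)))).val, hint _ ((intPoints Δ).neg_mem P.2)⟩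
      val_inv := Subtype.ext (hinvmul _)
      inv_val := Subtype.ext (by show fK (-(P : Conic ((Δ : ℚ)))).val * fK (P : Conic ((Δ : ℚ))).val = 1; rw [mul_comm]; exact hinvmul _) }
  have hUmul : ∀ P Q : ↥(intPoints Δ), U (P + Q) = U P * U Q := by
    intro P Q
    exact Units.ext (Subtype.ext (hmul (P : Conic ((Δ : ℚ))) (Q : Conic ((Δ : ℚ)))))
  let F : ↥(intPoints Δ) →+ Additive (NumberField.RingOfIntegers K)ˣ :=
    AddMonoidHom.mk' (fun P => Additive.ofMul (U P))
      (fun P Q => congrArg Additive.ofMul (hUmul P Q))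
  have hFinj : Function.Injective F := by
    intro P Q h
    have hU : U P = U Q := h
    have h1 : fK (P : Conic ((Δ : ℚ))).val = fK (Q : Conic ((Δ : ℚ))).val :=
      congrArg (fun u : (NumberField.RingOfIntegers K)ˣ => (u.val : K)) hU
    set p1 := (P : Conic ((Δ : ℚ))).val.1
    set p2 := (P : Conic ((Δ : ℚ))).val.2
    set q1 := (Q : Conic ((Δ : ℚ))).val.1
    set q2 := (Q : Conic ((Δ : ℚ))).val.2
    have h2 := hinj0 ((p1 - q1) / 2) ((p2 - q2) / 2) (by
      simp only [map_div₀, map_sub]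
      simp only [hfK, map_div₀] at h1
      linear_combination h1)
    have e1 : p1 = q1 := by
      have := h2.1; field_simp at this; linarith
    have e2 : p2 = q2 := by
      have := h2.2; field_simp at this; linarith
    apply Subtype.ext
    apply Subtype.ext
    exact Prod.ext e1 e2
  haveI : Monoid.FG (NumberField.RingOfIntegers K)ˣ := inferInstance
  haveI : AddGroup.FG (Additive (NumberField.RingOfIntegers K)ˣ) :=
    AddGroup.fg_iff_addMonoid_fg.mpr (Monoid.fg_iff_add_fg.mp inferInstance)
  haveI : Module.Finite ℤ (Additive (NumberField.RingOfIntegers K)ˣ) :=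
    Module.Finite.iff_addGroup_fg.mpr inferInstance
  haveI : IsNoetherian ℤ (Additive (NumberField.RingOfIntegers K)ˣ) :=
    isNoetherian_of_isNoetherianRing_of_finite ℤ _
  exact Module.Finite.of_injective F.toIntLinearMap hFinj

end MWAux

/-- Mordell–Weil for Pell conics: the group `C(ℤ)` of integral
points is finitely generated; hence `C(ℤ) ≅ C(ℤ)_tors ⊕ ℤ^r` with finite torsion
subgroup and some `r ≥ 0`. -/
theorem mordell_weil (d : ℤ) (hsf : Squarefree d) (hd0 : d ≠ 0) (hd1 : d ≠ 1)
    (Δ : ℤ) (hΔ : Δ = if d % 4 = 1 then d else 4 * d) :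
    AddGroup.FG (↥(intPoints Δ)) ∧
    Finite (↥(AddCommGroup.torsion (↥(intPoints Δ)))) ∧
    ∃ r : ℕ, Nonempty ((↥(intPoints Δ)) ≃+
      ((↥(AddCommGroup.torsion (↥(intPoints Δ)))) × (Fin r → ℤ))) := by
  have hΔ' : Δ = d ∨ Δ = 4 * d := by
    rw [hΔ]; split
    · exact Or.inl rfl
    · exact Or.inr rfl
  have hq := not_square d hsf hd1 Δ hΔ'
  haveI := intPoints_moduleFinite Δ hq
  have hAG : AddGroup.FG (↥(intPoints Δ)) := Module.Finite.iff_addGroup_fg.mp inferInstance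
  obtain ⟨hfin, hstruct⟩ := structThm (↥(intPoints Δ))
  exact ⟨hAG, hfin, hstruct⟩
end
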